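/- arXiv:0903.2791 — 12 statements merged into one kernel-verified Lean document; each statement's English description precedes it below -/
import Mathlib

section
/- Let $R$ be a finite local commutative ring and let $f(x), g(x) \in R[x]$ with $g$ regular (not a zero divisor). Then there exist $q(x), r(x) \in R[x]$ such that $f = g q + r$ and either $r = 0$ or $\deg r < \deg g$. -/
open Polynomial

/-- Coefficients of a product lie in the product ideal. -/
lemma coeff_mul_mem_mul {R : Type*} [CommRing R] {I J : Ideal R} {a b : R[X]}
    (ha : ∀ j, a.coeff j ∈ I) (hb : ∀ j, b.coeff j ∈ J) :
    ∀ j, (a * b).coeff j ∈ I * J := by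
  intro j
  rw [coeff_mul]
  exact Ideal.sum_mem _ fun x _ => Ideal.mul_mem_mul (ha _) (hb _)

/-- Division with remainder by a monic polynomial, keeping coefficients in an ideal. -/
lemma divI {R : Type*} [CommRing R] (p : R[X]) (hp : p.Monic) (I : Ideal R) :
    ∀ n : ℕ, ∀ f : R[X], f.natDegree ≤ n → (∀ j, f.coeff j ∈ I) →
    ∃ q r : R[X], f = p * q + r ∧ (r = 0 ∨ r.degree < p.degree) ∧
      (∀ j, q.coeff j ∈ I) ∧ (∀ j, r.coeff j ∈ I) := by
  intro n
  induction n using Nat.strong_induction_on with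
  | _ n ih =>
    intro f hfn hfI
    by_cases hf0 : f = 0
    · exact ⟨0, 0, by simp [hf0], Or.inl rfl, by simp, by simp⟩
    by_cases hdeg : f.degree < p.degree
    · exact ⟨0, f, by simp, Or.inr hdeg, by simp, hfI⟩
    haveI : Nontrivial R := Nontrivial.of_polynomial_ne hf0
    have hple : p.natDegree ≤ f.natDegree :=
      natDegree_le_natDegree (le_of_not_gt hdeg)
    set q₀ : R[X] := C f.leadingCoeff * X ^ (f.natDegree - p.natDegree) with hq₀
    have hlc : f.leadingCoeff ≠ 0 := leadingCoeff_ne_zero.2 hf0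
    have hq₀deg : q₀.degree = ((f.natDegree - p.natDegree : ℕ) : WithBot ℕ) := by
      rw [hq₀, degree_C_mul_X_pow _ hlc]
    have hdegmul : f.degree = (q₀ * p).degree := by
      rw [hp.degree_mul, hq₀deg, degree_eq_natDegree hp.ne_zero,
        degree_eq_natDegree hf0, ← Nat.cast_add, Nat.sub_add_cancel hple]
    have hlcmul : f.leadingCoeff = (q₀ * p).leadingCoeff := by
      rw [leadingCoeff_mul_monic hp, hq₀, leadingCoeff_mul_X_pow, leadingCoeff_C]
    have hq₀I : ∀ j, q₀.coeff j ∈ I := by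
      intro j
      rw [hq₀, coeff_C_mul, coeff_X_pow]
      split
      · rw [mul_one]; exact hfI f.natDegree
      · simp
    set f' : R[X] := f - q₀ * p with hf'
    have hf'deg : f'.degree < f.degree := degree_sub_lt hdegmul hf0 hlcmul
    have hf'I : ∀ j, f'.coeff j ∈ I := by
      intro j
      rw [hf', coeff_sub]
      refine I.sub_mem (hfI j) ?_
      rw [mul_assoc, coeff_C_mul]
      exact Ideal.mul_mem_right _ _ (hfI f.natDegree)
    by_cases hf'0 : f' = 0
    · refine ⟨q₀, 0, ?_, Or.inl rfl, hq₀I, by simp⟩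
      have : f - q₀ * p = 0 := hf'0
      linear_combination this
    · have hlt : f'.natDegree < n :=
        lt_of_lt_of_le (natDegree_lt_natDegree hf'0 hf'deg) hfn
      obtain ⟨q, r, heq, hr, hqI, hrI⟩ := ih f'.natDegree hlt f' le_rfl hf'I
      refine ⟨q₀ + q, r, ?_, hr, fun j => by rw [coeff_add]; exact I.add_mem (hq₀I j) (hqI j), hrI⟩
      have : f - q₀ * p = p * q + r := heq
      linear_combination this

theorem stmt2 (R : Type*) [CommRing R] [Finite R] [IsLocalRing R] (f g : R[X])
    (hg : g ∈ nonZeroDivisors R[X]) :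
    ∃ q r : R[X], f = g * q + r ∧ (r = 0 ∨ r.degree < g.degree) := by
  classical
  set m : Ideal R := IsLocalRing.maximalIdeal R with hm
  -- the maximal ideal is nilpotent
  obtain ⟨k, hk⟩ : ∃ k, m ^ k = ⊥ := by
    obtain ⟨k, hk⟩ := IsArtinianRing.isNilpotent_jacobson_bot (R := R)
    exact ⟨k, by rwa [IsLocalRing.jacobson_eq_maximalIdeal ⊥ bot_ne_top] at hk⟩
  -- some coefficient of g is a unit
  have hunit : ∃ j, IsUnit (g.coeff j) := by
    by_contra h
    push_neg at h
    have hmem : ∀ j, g.coeff j ∈ m := fun j => h j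
    -- minimal t with m ^ t = ⊥
    have hex : ∃ t, m ^ t = ⊥ := ⟨k, hk⟩
    set t := Nat.find hex with ht
    have htz : m ^ t = ⊥ := Nat.find_spec hex
    have ht0 : t ≠ 0 := by
      intro h0
      rw [h0, pow_zero, Ideal.one_eq_top] at htz
      exact one_ne_zero ((Submodule.eq_bot_iff _).mp htz 1 Submodule.mem_top)
    have hlt : m ^ (t - 1) ≠ ⊥ := Nat.find_min hex (Nat.sub_lt (Nat.pos_of_ne_zero ht0) one_pos)
    obtain ⟨a, haM, ha0⟩ := Submodule.exists_mem_ne_zero_of_ne_bot hlt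
    have hag : C a * g = 0 := by
      ext j
      rw [coeff_C_mul, coeff_zero]
      have : a * g.coeff j ∈ m ^ (t - 1) * m := Ideal.mul_mem_mul haM (hmem j)
      rw [← pow_succ, Nat.sub_add_cancel (Nat.pos_of_ne_zero ht0), htz] at this
      exact this
    have := hg.2 (C a) hag
    exact ha0 (by simpa using congrArg (fun p => Polynomial.coeff p 0) this)
  -- largest index with a unit coefficient
  set d := Nat.findGreatest (fun j => IsUnit (g.coeff j)) g.natDegree with hd
  have hdub : ∀ j, g.natDegree < j → ¬ IsUnit (g.coeff j) := by
    intro j hj hu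
    exact hu.ne_zero (coeff_eq_zero_of_natDegree_lt hj)
  have hdunit : IsUnit (g.coeff d) := by
    obtain ⟨j, hj⟩ := hunit
    have hjle : j ≤ g.natDegree := by
      by_contra hc
      exact hdub j (lt_of_not_ge hc) hj
    exact Nat.findGreatest_spec (P := fun j => IsUnit (g.coeff j)) hjle hj
  have hdm : ∀ j, d < j → g.coeff j ∈ m := by
    intro j hj
    by_cases hjle : j ≤ g.natDegree
    · exact fun hu => Nat.findGreatest_is_greatest hj hjle hu
    · rw [coeff_eq_zero_of_natDegree_lt (lt_of_not_ge hjle)]; exact m.zero_mem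
  have hddeg : (d : WithBot ℕ) ≤ g.degree := le_degree_of_ne_zero hdunit.ne_zero
  obtain ⟨u, hu⟩ := hdunit
  -- the monic polynomial p
  set p : R[X] := C (↑u⁻¹ : R) * ∑ j ∈ Finset.range (d + 1), C (g.coeff j) * X ^ j with hp
  have hpcoeff : ∀ i, p.coeff i = if i ≤ d then (↑u⁻¹ : R) * g.coeff i else 0 := by
    intro i
    rw [hp, coeff_C_mul, finset_sum_coeff]
    simp only [coeff_C_mul, coeff_X_pow, mul_ite, mul_one, mul_zero]
    rw [Finset.sum_ite_eq]
    simp [Finset.mem_range, Nat.lt_succ_iff, mul_ite]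
  have hpd1 : p.coeff d = 1 := by
    rw [hpcoeff d, if_pos le_rfl, ← hu, Units.inv_mul]
  have hpdle : p.natDegree ≤ d := by
    refine natDegree_le_iff_coeff_eq_zero.mpr fun i hi => ?_
    rw [hpcoeff i, if_neg (not_le.mpr hi)]
  have hpm : p.Monic := monic_of_natDegree_le_of_coeff_eq_one d hpdle hpd1
  have hpnd : p.natDegree = d :=
    le_antisymm hpdle (le_natDegree_of_ne_zero (by rw [hpd1]; exact one_ne_zero))
  have hpdeg : p.degree = (d : WithBot ℕ) := by
    rw [degree_eq_natDegree hpm.ne_zero, hpnd]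
  -- g = C u * p + h with h's coefficients in m
  set h : R[X] := g - C (↑u : R) * p with hh
  have hhm : ∀ i, h.coeff i ∈ m := by
    intro i
    rw [hh, coeff_sub, coeff_C_mul, hpcoeff i]
    split
    · next hi =>
      have huu : (↑u : R) * ((↑u⁻¹ : R) * g.coeff i) = g.coeff i := by
        rw [← mul_assoc, Units.mul_inv, one_mul]
      rw [huu, sub_self]
      exact m.zero_mem
    · next hi =>
      rw [mul_zero, sub_zero]
      exact hdm i (lt_of_not_ge hi)
  -- main induction
  have main : ∀ n : ℕ, ∀ f : R[X], (∀ j, f.coeff j ∈ m ^ (k - n)) →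
      ∃ q r : R[X], f = g * q + r ∧ (r = 0 ∨ r.degree < p.degree) := by
    intro n
    induction n with
    | zero =>
      intro f hf
      have hf0 : f = 0 := by
        ext j
        have := hf j
        rw [Nat.sub_zero, hk] at this
        simpa using this
      exact ⟨0, 0, by simp [hf0], Or.inl rfl⟩
    | succ n ihn =>
      intro f hf
      obtain ⟨q, r, heq, hr, hqI, hrI⟩ :=
        divI p hpm (m ^ (k - (n + 1))) f.natDegree f le_rfl hf
      -- f = g * (C u⁻¹ * q) + r + e  with e = - h * (C u⁻¹ * q)
      set q' : R[X] := C (↑u⁻¹ : R) * q with hq'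
      have hq'I : ∀ j, q'.coeff j ∈ m ^ (k - (n + 1)) := by
        intro j
        rw [hq', coeff_C_mul]
        exact Ideal.mul_mem_left _ _ (hqI j)
      set e : R[X] := f - g * q' - r with he
      have hee : e = - (h * q') := by
        rw [he, hh, hq', heq]
        have hcu : C (↑u : R) * C (↑u⁻¹ : R) = 1 := by
          rw [← C_mul, Units.mul_inv, C_1]
        linear_combination (-(p * q)) * hcu
      have hmle : m * m ^ (k - (n + 1)) ≤ m ^ (k - n) := by
        by_cases hkn : n + 1 ≤ k
        · have hsub : k - n = (k - (n + 1)) + 1 := by omega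
          rw [hsub, pow_succ, mul_comm]
        · have hsub : k - n = 0 := by omega
          rw [hsub, pow_zero, Ideal.one_eq_top]
          exact le_top
      have heI : ∀ j, e.coeff j ∈ m ^ (k - n) := by
        intro j
        rw [hee, coeff_neg]
        exact neg_mem (hmle (coeff_mul_mem_mul hhm hq'I j))
      obtain ⟨q₂, r₂, heq₂, hr₂⟩ := ihn e heI
      refine ⟨q' + q₂, r + r₂, by linear_combination heq₂ - he, ?_⟩
      have hr' : r.degree < p.degree := by
        rcases hr with rfl | hlt
        · rw [degree_zero, hpdeg]
          exact bot_lt_iff_ne_bot.mpr (by simp)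
        · exact hlt
      have hr₂' : r₂.degree < p.degree := by
        rcases hr₂ with rfl | hlt
        · rw [degree_zero, hpdeg]
          exact bot_lt_iff_ne_bot.mpr (by simp)
        · exact hlt
      exact Or.inr (lt_of_le_of_lt (degree_add_le _ _) (max_lt hr' hr₂'))
  obtain ⟨q, r, heq, hr⟩ := main k f (by
    intro j
    rw [Nat.sub_self, pow_zero, Ideal.one_eq_top]
    exact Submodule.mem_top)
  exact ⟨q, r, heq, hr.imp id fun hlt => lt_of_lt_of_le (hpdeg ▸ hlt) hddeg⟩
end

section
/- Let $p$ be an odd prime, $a > 1$, $s \geq 1$, and let $R = \mathbb{Z}_{p^a}[x]/\langle x^{p^s}+1 \rangle$. Then $R$ is a local ring whose maximal ideal is $\langle p, x+1 \rangle$. -/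
open Polynomial

section Aux

variable {p a : ℕ}

lemma aux_ker_castHom (hp : p.Prime) (ha : a ≠ 0) (h : p ∣ p ^ a) :
    RingHom.ker (ZMod.castHom h (ZMod p)) = Ideal.span {(p : ZMod (p ^ a))} := by
  haveI : NeZero (p ^ a) := ⟨pow_ne_zero a hp.pos.ne'⟩
  ext x
  simp only [RingHom.mem_ker, Ideal.mem_span_singleton]
  constructor
  · intro hx
    obtain ⟨n, rfl⟩ := ZMod.natCast_zmod_surjective x
    rw [map_natCast] at hx
    rw [ZMod.natCast_eq_zero_iff] at hx
    obtain ⟨k, rfl⟩ := hx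
    exact ⟨(k : ZMod (p ^ a)), by push_cast; ring⟩
  · rintro ⟨c, rfl⟩
    rw [map_mul, map_natCast, ZMod.natCast_self, zero_mul]

lemma aux_ker_map (hp : p.Prime) (ha : a ≠ 0) (h : p ∣ p ^ a) :
    RingHom.ker (Polynomial.mapRingHom (ZMod.castHom h (ZMod p))) =
      Ideal.span {(p : (ZMod (p ^ a))[X])} := by
  rw [Polynomial.ker_mapRingHom, aux_ker_castHom hp ha h, Ideal.map_span]
  simp

end Aux

theorem stmt5 (p a s : ℕ) (hp : p.Prime) (hodd : p ≠ 2) (ha : 1 < a) (hs : 1 ≤ s) :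
    ∃ h : IsLocalRing ((ZMod (p ^ a))[X] ⧸
        Ideal.span {(X : (ZMod (p ^ a))[X]) ^ p ^ s + 1}),
      @IsLocalRing.maximalIdeal _ _ h =
        Ideal.span {((p : (ZMod (p ^ a))[X] ⧸
            Ideal.span {(X : (ZMod (p ^ a))[X]) ^ p ^ s + 1})),
          Ideal.Quotient.mk (Ideal.span {(X : (ZMod (p ^ a))[X]) ^ p ^ s + 1}) (X + 1)} := by
  haveI : Fact p.Prime := ⟨hp⟩
  have ha0 : a ≠ 0 := by omega
  have hdvd : p ∣ p ^ a := dvd_pow_self p ha0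
  set I : Ideal (ZMod (p ^ a))[X] := Ideal.span {(X : (ZMod (p ^ a))[X]) ^ p ^ s + 1} with hI
  -- the map to ZMod p [X]
  set ψ : (ZMod (p ^ a))[X] →+* (ZMod p)[X] := Polynomial.mapRingHom (ZMod.castHom hdvd (ZMod p)) with hψ
  have hkerψ : RingHom.ker ψ = Ideal.span {(p : (ZMod (p ^ a))[X])} := aux_ker_map hp ha0 hdvd
  -- key congruence: (X+1)^{p^s} - (X^{p^s}+1) ∈ (p)
  have hψX1 : ψ (X + 1 : (ZMod (p ^ a))[X]) = (X + 1 : (ZMod p)[X]) := by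
    simp [hψ, coe_mapRingHom]
  have hd : (X + 1 : (ZMod (p ^ a))[X]) ^ p ^ s - ((X : (ZMod (p ^ a))[X]) ^ p ^ s + 1) ∈ Ideal.span {(p : (ZMod (p ^ a))[X])} := by
    rw [← hkerψ, RingHom.mem_ker, map_sub, map_add, map_pow, map_pow, map_one, hψX1]
    have hX : ψ (X : (ZMod (p ^ a))[X]) = (X : (ZMod p)[X]) := by simp [hψ, coe_mapRingHom]
    rw [hX, add_pow_char_pow, one_pow, sub_self]
  -- the evaluation map φ : (ZMod (p ^ a))[X] → ZMod p
  set φ : (ZMod (p ^ a))[X] →+* ZMod p := (Polynomial.evalRingHom (-1 : ZMod p)).comp ψ with hφ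
  have hφsurj : Function.Surjective φ := ZMod.ringHom_surjective φ
  set M : Ideal (ZMod (p ^ a))[X] := Ideal.span {(p : (ZMod (p ^ a))[X]), (X + 1 : (ZMod (p ^ a))[X])} with hM
  have hMker : M = RingHom.ker φ := by
    apply le_antisymm
    · rw [hM, Ideal.span_le]
      rintro x hx
      simp only [Set.mem_insert_iff, Set.mem_singleton_iff] at hx
      rcases hx with rfl | rfl
      · simp only [SetLike.mem_coe, RingHom.mem_ker, hφ, RingHom.comp_apply]
        rw [map_natCast ψ, map_natCast (Polynomial.evalRingHom (-1 : ZMod p)),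
          ZMod.natCast_self]
      · simp only [SetLike.mem_coe, RingHom.mem_ker, hφ, RingHom.comp_apply, hψX1]
        simp
    · intro f hf
      rw [RingHom.mem_ker, hφ, RingHom.comp_apply] at hf
      have hroot : (ψ f).IsRoot (-1) := hf
      rw [← Polynomial.dvd_iff_isRoot] at hroot
      obtain ⟨q, hq⟩ := hroot
      obtain ⟨q', hq'⟩ := Polynomial.map_surjective _ (ZMod.ringHom_surjective
        (ZMod.castHom hdvd (ZMod p))) q
      have hq2 : ψ f = (X + 1) * q := by
        rw [hq]
        congr 1
        simp
      have hψq' : ψ q' = q := hq'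
      have hker : f - (X + 1) * q' ∈ RingHom.ker ψ := by
        rw [RingHom.mem_ker, map_sub, map_mul, hψX1, hψq', hq2, sub_self]
      rw [hkerψ] at hker
      have h1 : f - (X + 1) * q' ∈ M := by
        rw [hM]
        exact Ideal.span_mono (by simp) hker
      have h2 : (X + 1 : (ZMod (p ^ a))[X]) * q' ∈ M := by
        exact Ideal.mul_mem_right _ _ (Ideal.subset_span (by simp))
      have := M.add_mem h1 h2
      simpa using this
  have hMmax : M.IsMaximal := hMker ▸ RingHom.ker_isMaximal_of_surjective φ hφsurj
  -- I ≤ M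
  have hIM : I ≤ M := by
    rw [hI, Ideal.span_le]
    intro x hx
    simp only [Set.mem_singleton_iff] at hx
    subst hx
    have h1 : (X + 1 : (ZMod (p ^ a))[X]) ^ p ^ s ∈ M :=
      Ideal.pow_mem_of_mem M (Ideal.subset_span (by simp)) _ (pow_pos hp.pos s)
    have h2 : (X + 1 : (ZMod (p ^ a))[X]) ^ p ^ s - ((X : (ZMod (p ^ a))[X]) ^ p ^ s + 1) ∈ M := by
      refine Ideal.span_mono ?_ hd
      simp [hM]
    have := M.sub_mem h1 h2
    simpa using this
  -- the quotient ring
  set mk := Ideal.Quotient.mk I with hmk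
  set m : Ideal ((ZMod (p ^ a))[X] ⧸ I) := Ideal.span {((p : (ZMod (p ^ a))[X] ⧸ I)), mk (X + 1)} with hm
  have hmmap : m = M.map mk := by
    rw [hM, Ideal.map_span, hm]
    congr 1
    simp [Set.image_insert_eq, Set.image_singleton]
  -- m is maximal via lift
  have hIkerφ : I ≤ RingHom.ker φ := hMker ▸ hIM
  have hmmax : m.IsMaximal := by
    rw [hmmap, hMker]
    have : RingHom.ker (Ideal.Quotient.lift I φ hIkerφ) = (RingHom.ker φ).map mk :=
      Ideal.ker_quotient_lift φ hIkerφ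
    rw [← this]
    exact RingHom.ker_isMaximal_of_surjective _ (fun z => by
      obtain ⟨x, hx⟩ := hφsurj z
      exact ⟨mk x, hx⟩)
  -- nilpotency of the generators
  have hpa : ((p : (ZMod (p ^ a))[X] ⧸ I)) ^ a = 0 := by
    have h1 : ((p : (ZMod (p ^ a))[X] ⧸ I)) ^ a = ((p ^ a : ℕ) : (ZMod (p ^ a))[X] ⧸ I) := by push_cast; ring
    have h2 : ((p ^ a : ℕ) : (ZMod (p ^ a))[X]) = 0 := by
      rw [← map_natCast Polynomial.C, ZMod.natCast_self, map_zero]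
    rw [h1, ← map_natCast mk, h2, map_zero]
  have hpnil : IsNilpotent ((p : (ZMod (p ^ a))[X] ⧸ I)) := ⟨a, hpa⟩
  have hxnil : IsNilpotent (mk (X + 1)) := by
    obtain ⟨c, hc⟩ := Ideal.mem_span_singleton.mp hd
    refine ⟨p ^ s * a, ?_⟩
    rw [pow_mul, ← map_pow]
    have hmkeq : (mk ((X + 1 : (ZMod (p ^ a))[X]) ^ p ^ s)) = mk ((p : (ZMod (p ^ a))[X]) * c) := by
      rw [Ideal.Quotient.eq]
      have heq : (X + 1 : (ZMod (p ^ a))[X]) ^ p ^ s - (p : (ZMod (p ^ a))[X]) * c = (X : (ZMod (p ^ a))[X]) ^ p ^ s + 1 := by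
        rw [← hc]; ring
      rw [heq, hI]
      exact Ideal.subset_span rfl
    rw [hmkeq, map_mul, mul_pow, map_natCast, hpa, zero_mul]
  -- every maximal ideal equals m
  have huniq : ∀ J : Ideal ((ZMod (p ^ a))[X] ⧸ I), J.IsMaximal → J = m := by
    intro J hJ
    have hle : m ≤ J := by
      rw [hm, Ideal.span_le]
      rintro x hx
      simp only [Set.mem_insert_iff, Set.mem_singleton_iff] at hx
      rcases hx with rfl | rfl
      · exact nilpotent_iff_mem_prime.mp hpnil J hJ.isPrime
      · exact nilpotent_iff_mem_prime.mp hxnil J hJ.isPrime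
    exact ((hmmax.eq_of_le hJ.ne_top hle)).symm
  haveI hloc : IsLocalRing ((ZMod (p ^ a))[X] ⧸ I) := IsLocalRing.of_unique_max_ideal ⟨m, hmmax, huniq⟩
  exact ⟨hloc, (IsLocalRing.eq_maximalIdeal hmmax).symm⟩
end

section
/- Let $p$ be an odd prime, $a > 1$, $s \geq 1$, and $R = \mathbb{Z}_{p^a}[x]/\langle x^{p^s}+1 \rangle$. Then the image of $p$ in $R$ does not lie in the ideal generated by $x+1$. -/
open Polynomial

theorem stmt6 (p a s : ℕ) (hp : p.Prime) (hodd : p ≠ 2) (ha : 1 < a) (hs : 1 ≤ s) :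
    (p : (ZMod (p ^ a))[X] ⧸ Ideal.span {(X : (ZMod (p ^ a))[X]) ^ p ^ s + 1}) ∉
      Ideal.span {Ideal.Quotient.mk
        (Ideal.span {(X : (ZMod (p ^ a))[X]) ^ p ^ s + 1}) (X + 1)} := by
  intro h
  set I := Ideal.span {(X : (ZMod (p ^ a))[X]) ^ p ^ s + 1} with hI
  rw [Ideal.mem_span_singleton] at h
  obtain ⟨q, hq⟩ := h
  obtain ⟨q', rfl⟩ := Ideal.Quotient.mk_surjective q
  have hmem : (p : (ZMod (p ^ a))[X]) - (X + 1) * q' ∈ I := by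
    rw [← Ideal.Quotient.eq_zero_iff_mem, map_sub, map_mul, map_natCast]
    rw [hq]
    ring
  rw [hI, Ideal.mem_span_singleton] at hmem
  obtain ⟨r, hr⟩ := hmem
  have hodd' : Odd (p ^ s) := (hp.odd_of_ne_two hodd).pow
  have := congrArg (Polynomial.eval (-1 : ZMod (p ^ a))) hr
  simp [hodd'.neg_one_pow] at this
  have hdvd : p ^ a ∣ p := (ZMod.natCast_eq_zero_iff p (p ^ a)).mp this
  have hle : p ^ a ≤ p := Nat.le_of_dvd hp.pos hdvd
  have hlt : p < p ^ a := by
    calc p = p ^ 1 := (pow_one p).symm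
    _ < p ^ a := Nat.pow_lt_pow_right hp.one_lt ha
  omega
end

section
/- Let $p$ be an odd prime, $a > 1$, $s \geq 1$, and $R = \mathbb{Z}_{p^a}[x]/\langle x^{p^s}+1 \rangle$. Then $R$ is not a chain ring; that is, there exist ideals $I, J$ of $R$ with $I \not\subseteq J$ and $J \not\subseteq I$. -/
open Polynomial

theorem stmt8 (p a s : ℕ) (hp : p.Prime) (hodd : p ≠ 2) (ha : 1 < a) (hs : 1 ≤ s) :
    ∃ I J : Ideal ((ZMod (p ^ a))[X] ⧸
        Ideal.span {(X : (ZMod (p ^ a))[X]) ^ p ^ s + 1}),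
      ¬ I ≤ J ∧ ¬ J ≤ I := by
  haveI : NeZero (p ^ a) := ⟨pow_ne_zero _ hp.ne_zero⟩
  haveI : Fact p.Prime := ⟨hp⟩
  have hodd' : Odd (p ^ s) := (hp.odd_of_ne_two hodd).pow
  have hps3 : 3 ≤ p ^ s := by
    have hp3 : 3 ≤ p := by
      have h2 := hp.two_le
      rcases hp.eq_two_or_odd with h | h
      · exact absurd h hodd
      · omega
    calc 3 ≤ p := hp3
    _ = p ^ 1 := (pow_one p).symm
    _ ≤ p ^ s := Nat.pow_le_pow_right hp.pos hs
  set q := Ideal.Quotient.mk (Ideal.span {(X : (ZMod (p ^ a))[X]) ^ p ^ s + 1}) with hq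
  refine ⟨Ideal.span {q (C ((p : ℕ) : ZMod (p ^ a)))}, Ideal.span {q (X + 1)}, ?_, ?_⟩
  · intro h
    have hmem : q (C ((p : ℕ) : ZMod (p ^ a))) ∈ Ideal.span {q (X + 1)} :=
      h (Ideal.subset_span rfl)
    rw [Ideal.mem_span_singleton] at hmem
    obtain ⟨c, hc⟩ := hmem
    obtain ⟨f, rfl⟩ := Ideal.Quotient.mk_surjective c
    have hmem2 : C ((p : ℕ) : ZMod (p ^ a)) - (X + 1) * f ∈
        Ideal.span {(X : (ZMod (p ^ a))[X]) ^ p ^ s + 1} := by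
      rw [← Ideal.Quotient.eq_zero_iff_mem]
      rw [map_sub, map_mul]
      rw [← hq] at hc ⊢
      rw [hc]
      ring
    rw [Ideal.mem_span_singleton] at hmem2
    obtain ⟨g, hg⟩ := hmem2
    have hev := congrArg (Polynomial.eval (-1 : ZMod (p ^ a))) hg
    simp only [eval_sub, eval_mul, eval_add, eval_C, eval_X, eval_one, eval_pow] at hev
    rw [hodd'.neg_one_pow] at hev
    simp at hev
    -- hev : (p : ZMod (p^a)) = 0
    rw [ZMod.natCast_eq_zero_iff] at hev
    have h1 : p ^ a ≤ p := Nat.le_of_dvd hp.pos hev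
    have h2 : p < p ^ a := by
      calc p = p ^ 1 := (pow_one p).symm
      _ < p ^ a := Nat.pow_lt_pow_right hp.one_lt ha
    omega
  · intro h
    have hmem : q (X + 1) ∈ Ideal.span {q (C ((p : ℕ) : ZMod (p ^ a)))} :=
      h (Ideal.subset_span rfl)
    rw [Ideal.mem_span_singleton] at hmem
    obtain ⟨c, hc⟩ := hmem
    obtain ⟨f, rfl⟩ := Ideal.Quotient.mk_surjective c
    have hmem2 : (X + 1 : (ZMod (p ^ a))[X]) - C ((p : ℕ) : ZMod (p ^ a)) * f ∈
        Ideal.span {(X : (ZMod (p ^ a))[X]) ^ p ^ s + 1} := by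
      rw [← Ideal.Quotient.eq_zero_iff_mem]
      rw [map_sub, map_mul]
      rw [← hq] at hc ⊢
      rw [hc]
      ring
    rw [Ideal.mem_span_singleton] at hmem2
    obtain ⟨g, hg⟩ := hmem2
    -- map to ZMod p
    have hdvd : p ∣ p ^ a := dvd_pow_self p (by omega)
    have hmap := congrArg (Polynomial.map (ZMod.castHom hdvd (ZMod p))) hg
    simp only [Polynomial.map_sub, Polynomial.map_mul, Polynomial.map_add,
      Polynomial.map_pow, Polynomial.map_X, Polynomial.map_one, Polynomial.map_C] at hmap
    have hC0 : (ZMod.castHom hdvd (ZMod p)) ((p : ℕ) : ZMod (p ^ a)) = 0 := by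
      simp
    rw [hC0, map_zero, zero_mul, sub_zero] at hmap
    set g' := Polynomial.map (ZMod.castHom hdvd (ZMod p)) g with hg'
    have hXne : (X ^ p ^ s + 1 : (ZMod p)[X]) ≠ 0 := by
      have : (X ^ p ^ s + C (1 : ZMod p)).Monic :=
        monic_X_pow_add_C _ (by omega : p ^ s ≠ 0)
      simpa using this.ne_zero
    by_cases hg0 : g' = 0
    · rw [hg0, mul_zero] at hmap
      have := congrArg (Polynomial.coeff · 0) hmap
      simp at this
    · have hdeg := congrArg Polynomial.natDegree hmap
      rw [natDegree_mul hXne hg0] at hdeg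
      have hd1 : (X + 1 : (ZMod p)[X]).natDegree = 1 := by
        simpa using natDegree_X_add_C (1 : ZMod p)
      have hd2 : (X ^ p ^ s + 1 : (ZMod p)[X]).natDegree = p ^ s := by
        simpa using natDegree_X_pow_add_C (n := p ^ s) (r := (1 : ZMod p))
      rw [hd1, hd2] at hdeg
      omega
end

section
/- Let $p$ be an odd prime, $a > 1$, $s \geq 1$, and $R = \mathbb{Z}_{p^a}[x]/\langle x^{p^s}+1 \rangle$. Then the maximal ideal $\langle p, x+1 \rangle$ of $R$ is not a principal ideal. -/
open Polynomial

theorem stmt9 (p a s : ℕ) (hp : p.Prime) (hodd : p ≠ 2) (ha : 1 < a) (hs : 1 ≤ s) :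
    ¬ (Ideal.span {((p : (ZMod (p ^ a))[X] ⧸
          Ideal.span {(X : (ZMod (p ^ a))[X]) ^ p ^ s + 1})),
        Ideal.Quotient.mk (Ideal.span {(X : (ZMod (p ^ a))[X]) ^ p ^ s + 1})
          (X + 1)}).IsPrincipal := by
  intro hpr
  haveI : Fact p.Prime := ⟨hp⟩
  haveI : NeZero (p ^ a) := ⟨(pow_pos hp.pos a).ne'⟩
  set f : (ZMod (p ^ a))[X] := X ^ p ^ s + 1 with hf
  set Q := Ideal.span {f} with hQ
  set π := Ideal.Quotient.mk Q with hπ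
  obtain ⟨g, hg⟩ := hpr
  rw [Ideal.submodule_span_eq] at hg
  -- memberships
  have hp_mem : (p : (ZMod (p ^ a))[X] ⧸ Q) ∈ Ideal.span {g} := by
    rw [← hg]; exact Ideal.subset_span (by simp)
  have hx_mem : π (X + 1) ∈ Ideal.span {g} := by
    rw [← hg]; exact Ideal.subset_span (by simp)
  have hg_mem : g ∈ Ideal.span {(p : (ZMod (p ^ a))[X] ⧸ Q), π (X + 1)} := by
    rw [hg]; exact Ideal.mem_span_singleton_self g
  obtain ⟨G, hG⟩ := Ideal.Quotient.mk_surjective (I := Q) g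
  obtain ⟨u, hu⟩ := Ideal.mem_span_singleton.mp hp_mem
  obtain ⟨v, hv⟩ := Ideal.mem_span_singleton.mp hx_mem
  obtain ⟨r, t, hrt⟩ := Ideal.mem_span_pair.mp hg_mem
  obtain ⟨U, hU⟩ := Ideal.Quotient.mk_surjective (I := Q) u
  obtain ⟨V, hV⟩ := Ideal.Quotient.mk_surjective (I := Q) v
  obtain ⟨Rr, hRr⟩ := Ideal.Quotient.mk_surjective (I := Q) r
  obtain ⟨T, hT⟩ := Ideal.Quotient.mk_surjective (I := Q) t
  -- lift the three relations to A
  have lift : ∀ P : (ZMod (p ^ a))[X], π P = 0 → f ∣ P := by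
    intro P hP
    rw [← Ideal.mem_span_singleton, ← hQ, ← Ideal.Quotient.eq_zero_iff_mem]
    exact hP
  obtain ⟨W1, hW1⟩ : f ∣ (p : (ZMod (p ^ a))[X]) - G * U := by
    apply lift
    rw [map_sub, map_mul, hG, hU, map_natCast, hu]
    exact sub_self _
  obtain ⟨W2, hW2⟩ : f ∣ (X + 1 : (ZMod (p ^ a))[X]) - G * V := by
    apply lift
    rw [map_sub, map_mul, hG, hV, hv]
    exact sub_self _
  obtain ⟨W3, hW3⟩ : f ∣ Rr * (p : (ZMod (p ^ a))[X]) + T * (X + 1) - G := by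
    apply lift
    rw [map_sub, map_add, map_mul, map_mul, hG, hRr, hT, map_natCast, hrt]
    exact sub_self _
  have E1 : (p : (ZMod (p ^ a))[X]) = G * U + f * W1 := by linear_combination hW1
  have E2 : (X + 1 : (ZMod (p ^ a))[X]) = G * V + f * W2 := by linear_combination hW2
  have E3 : G = Rr * (p : (ZMod (p ^ a))[X]) + T * (X + 1) - f * W3 := by linear_combination -hW3
  -- evaluation at -1
  have hodd' : Odd (p ^ s) := (hp.odd_of_ne_two hodd).pow
  have hfe : eval (-1 : ZMod (p ^ a)) f = 0 := by
    rw [hf, eval_add, eval_pow, eval_X, eval_one, hodd'.neg_one_pow, neg_add_cancel]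
  set c := eval (-1 : ZMod (p ^ a)) Rr with hc
  have e3 : eval (-1 : ZMod (p ^ a)) G = c * p := by
    have := congrArg (eval (-1 : ZMod (p ^ a))) E3
    simpa [hfe] using this
  have e1 : (p : ZMod (p ^ a)) = c * p * eval (-1) U := by
    have := congrArg (eval (-1 : ZMod (p ^ a))) E1
    simpa [hfe, e3] using this
  have e2 : (0 : ZMod (p ^ a)) = c * p * eval (-1) V := by
    have := congrArg (eval (-1 : ZMod (p ^ a))) E2
    simpa [hfe, e3] using this
  -- the reduction map mod p
  have hdvd : p ∣ p ^ a := dvd_pow_self p (by omega)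
  set χ : ZMod (p ^ a) →+* ZMod p := ZMod.castHom hdvd (ZMod p) with hχ
  have key : ∀ x : ZMod (p ^ a), (p : ZMod (p ^ a)) * x = 0 → χ x = 0 := by
    intro x hx
    obtain ⟨n, rfl⟩ := ZMod.natCast_zmod_surjective x
    rw [← Nat.cast_mul] at hx
    have h1 : (p ^ a : ℕ) ∣ p * n := (ZMod.natCast_eq_zero_iff _ _).mp hx
    have h2 : p ^ 2 ∣ p * n := dvd_trans (pow_dvd_pow p ha) h1
    have h3 : p ∣ n := by
      rcases h2 with ⟨k, hk⟩
      refine ⟨k, ?_⟩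
      have hp0 : p ≠ 0 := hp.ne_zero
      have : p * n = p * (p * k) := by rw [hk]; ring
      exact Nat.eq_of_mul_eq_mul_left hp.pos this
    rw [map_natCast]
    exact (ZMod.natCast_eq_zero_iff _ _).mpr h3
  have hcu : χ c * χ (eval (-1) U) = 1 := by
    have : (p : ZMod (p ^ a)) * (c * eval (-1) U - 1) = 0 := by
      linear_combination -e1
    have h0 := key _ this
    rw [map_sub, map_mul, map_one, sub_eq_zero] at h0
    exact h0
  have hcv : χ (eval (-1) V) = 0 := by
    have : (p : ZMod (p ^ a)) * (c * eval (-1) V) = 0 := by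
      linear_combination -e2
    have h0 := key _ this
    rw [map_mul] at h0
    calc χ (eval (-1) V) = (χ c * χ (eval (-1) U)) * χ (eval (-1) V) := by rw [hcu, one_mul]
    _ = χ (eval (-1) U) * (χ c * χ (eval (-1) V)) := by ring
    _ = 0 := by rw [h0, mul_zero]
  -- reduce polynomials mod p
  have hmapeval : ∀ P : (ZMod (p ^ a))[X], eval (-1 : ZMod p) (P.map χ) = χ (eval (-1) P) := by
    intro P
    rw [show (-1 : ZMod p) = χ (-1) by simp, Polynomial.eval_map, Polynomial.eval₂_at_apply]
  have hfbar : f.map χ = (X + 1 : (ZMod p)[X]) ^ p ^ s := by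
    rw [add_pow_char_pow]
    simp [hf]
  have E2' : (X + 1 : (ZMod p)[X]) = G.map χ * V.map χ + (X + 1) ^ p ^ s * W2.map χ := by
    have := congrArg (Polynomial.map χ) E2
    simpa [Polynomial.map_add, Polynomial.map_mul, hfbar] using this
  have E3' : G.map χ = T.map χ * (X + 1) - (X + 1) ^ p ^ s * W3.map χ := by
    have := congrArg (Polynomial.map χ) E3
    have hpz : ((p : (ZMod (p ^ a))[X]).map χ) = 0 := by
      rw [Polynomial.map_natCast]
      exact_mod_cast CharP.cast_eq_zero (ZMod p)[X] p
    rw [Polynomial.map_sub, Polynomial.map_add, Polynomial.map_mul, Polynomial.map_mul,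
      Polynomial.map_mul, Polynomial.map_add, Polynomial.map_X, Polynomial.map_one,
      hpz, mul_zero, zero_add, hfbar] at this
    exact this
  have hpse : p ^ s = (p ^ s - 1) + 1 := by
    have : 1 ≤ p ^ s := Nat.one_le_pow _ _ hp.pos
    omega
  have Efac : (X + 1 : (ZMod p)[X]) * 1 =
      (X + 1) * (T.map χ * V.map χ +
        (X + 1) ^ (p ^ s - 1) * (W2.map χ - W3.map χ * V.map χ)) := by
    rw [mul_one]
    calc (X + 1 : (ZMod p)[X])
        = G.map χ * V.map χ + (X + 1) ^ p ^ s * W2.map χ := E2'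
      _ = (T.map χ * (X + 1) - (X + 1) ^ p ^ s * W3.map χ) * V.map χ
            + (X + 1) ^ p ^ s * W2.map χ := by rw [E3']
      _ = (X + 1) * (T.map χ * V.map χ +
            (X + 1) ^ (p ^ s - 1) * (W2.map χ - W3.map χ * V.map χ)) := by
          obtain ⟨n, hn⟩ : ∃ n, p ^ s = n + 1 := ⟨p ^ s - 1, by omega⟩
          rw [hn, Nat.add_sub_cancel]; ring
  have hX1 : (X + 1 : (ZMod p)[X]) ≠ 0 := by
    simpa using Polynomial.X_add_C_ne_zero (1 : ZMod p)
  have Ecancel : (1 : (ZMod p)[X]) = T.map χ * V.map χ +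
      (X + 1) ^ (p ^ s - 1) * (W2.map χ - W3.map χ * V.map χ) :=
    mul_left_cancel₀ hX1 Efac
  have := congrArg (eval (-1 : ZMod p)) Ecancel
  have hps1 : p ^ s - 1 ≠ 0 := by
    have h3 : 3 ≤ p := by
      have := hp.two_le; omega
    have : p ≤ p ^ s := Nat.le_self_pow (by omega) p
    omega
  rw [eval_one, eval_add, eval_mul, eval_mul, eval_pow, eval_add, eval_X, eval_one,
    neg_add_cancel, zero_pow hps1, zero_mul, add_zero, hmapeval, hmapeval, hcv,
    mul_zero] at this
  exact one_ne_zero this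
end

section
/- Let $p$ be an odd prime, $a > 1$, $s \geq 1$, and $R = \mathbb{Z}_{p^a}[x]/\langle x^{p^s}+1 \rangle$. For every $t \geq 0$ there exist an invertible element $b_t(x) \in R$ and $a_t(x) \in R$ divisible by $p^{t+2}$ such that $(x+1)^{p^s + t(p-1)p^{s-1}} = p^{t+1} b_t(x)(x+1)^{p^{s-1}} + a_t(x)$ in $R$. -/
open Polynomial

lemma aux1 {p : ℕ} (hp : p.Prime) (n : ℕ) :
    (C (p:ℤ)) ∣ ((X+1)^(p^n) - X^(p^n) - 1 : ℤ[X]) := by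
  haveI : Fact p.Prime := ⟨hp⟩
  rw [Polynomial.C_dvd_iff_dvd_coeff]
  intro i
  have h0 : (((X+1)^(p^n) - X^(p^n) - 1 : ℤ[X]).map (Int.castRingHom (ZMod p))) = 0 := by
    simp only [Polynomial.map_sub, Polynomial.map_pow, Polynomial.map_add,
      Polynomial.map_one, Polynomial.map_X]
    rw [add_pow_char_pow]
    simp
  rw [← ZMod.intCast_zmod_eq_zero_iff_dvd]
  have := congrArg (fun q => Polynomial.coeff q i) h0
  simp only [Polynomial.coeff_map, Polynomial.coeff_zero, Int.coe_castRingHom] at this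
  exact this

lemma lemma1 {p s : ℕ} (hp : p.Prime) (hodd : p ≠ 2) (hs : 1 ≤ s) :
    ∃ B C : ℤ[X], (X+1)^(p^s) = X^(p^s) + 1 + Polynomial.C (p:ℤ) * B * ((X+1)^(p^(s-1)))
      + Polynomial.C (p:ℤ)^2 * C ∧ B.eval (-1) = -1 := by
  have hpodd : Odd p := hp.odd_of_ne_two hodd
  have hp0 : (p:ℤ) ≠ 0 := by exact_mod_cast hp.ne_zero
  obtain ⟨K, hK⟩ := aux1 hp 1
  rw [pow_one] at hK
  -- K.eval (-1) = 0
  have hKe : K.eval (-1) = 0 := by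
    have h := congrArg (Polynomial.eval (-1 : ℤ)) hK
    simp [hpodd.neg_one_pow, zero_pow hp.ne_zero] at h
    exact h.resolve_left hp.ne_zero
  have hdvd : (X + 1 : ℤ[X]) ∣ K := by
    have h : (X - Polynomial.C (-1 : ℤ)) ∣ K := (Polynomial.dvd_iff_isRoot).2 hKe
    simpa [sub_neg_eq_add] using h
  obtain ⟨M, hM⟩ := hdvd
  -- derivative
  have hKd : Polynomial.derivative K = (X+1)^(p-1) - X^(p-1) := by
    have h := congrArg Polynomial.derivative hK
    simp only [Polynomial.derivative_sub, Polynomial.derivative_pow, Polynomial.derivative_add,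
      Polynomial.derivative_X, Polynomial.derivative_one, Polynomial.derivative_C_mul,
      Polynomial.derivative_X_pow] at h
    apply mul_left_cancel₀ (a := Polynomial.C (p:ℤ)) (by simpa using hp0)
    rw [← h]
    ring
  have hMe : M.eval (-1) = -1 := by
    have h := congrArg (Polynomial.eval (-1 : ℤ)) (congrArg Polynomial.derivative hM)
    have hpe : Even (p - 1) := Nat.Odd.sub_odd hpodd odd_one
    have hp1 : p - 1 ≠ 0 := by have := hp.two_le; omega
    simp [hKd, Polynomial.derivative_mul, zero_pow hp1, hpe.neg_one_pow] at h
    linarith [h]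
  -- step F
  obtain ⟨U, hU⟩ := aux1 hp (s-1)
  have hps : p^(s-1) * p = p^s := by
    rw [← pow_succ]; congr 1; omega
  have hZW : ((p:ℕ) : ℤ[X]) ∣ ((X+1)^(p^(s-1)) - (X^(p^(s-1)) + 1)) := by
    rw [Polynomial.C_eq_natCast] at hU
    exact ⟨U, by linear_combination hU⟩
  have h2 := dvd_sub_pow_of_dvd_sub hZW 1
  rw [pow_one] at h2
  obtain ⟨V, hV⟩ := h2
  -- comp
  have hKW : (X^(p^(s-1))+1)^p - X^(p^s) - 1
      = Polynomial.C (p:ℤ) * ((X^(p^(s-1))+1) * M.comp (X^(p^(s-1)))) := by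
    have h := congrArg (fun q => Polynomial.comp q (X^(p^(s-1)) : ℤ[X])) hK
    simp only [Polynomial.sub_comp, Polynomial.add_comp, Polynomial.pow_comp,
      Polynomial.X_comp, Polynomial.one_comp, Polynomial.mul_comp, Polynomial.C_comp] at h
    rw [hM, Polynomial.mul_comp, Polynomial.add_comp, Polynomial.X_comp, Polynomial.one_comp]
      at h
    rw [← pow_mul, hps] at h
    linear_combination h
  refine ⟨M.comp (X^(p^(s-1))), V - U * M.comp (X^(p^(s-1))), ?_, ?_⟩
  · have he4 : ((X+1:ℤ[X])^(p^(s-1)))^p = (X+1)^(p^s) := by rw [← pow_mul, hps]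
    rw [Polynomial.C_eq_natCast] at hU hK hKW ⊢
    linear_combination hV + hKW - he4 - ((p:ℤ[X]) * M.comp (X^(p^(s-1)))) * hU
  · have : Odd (p^(s-1)) := hpodd.pow
    simp [Polynomial.eval_comp, this.neg_one_pow, hMe]

theorem stmt10 (p a s : ℕ) (hp : p.Prime) (hodd : p ≠ 2) (ha : 1 < a) (hs : 1 ≤ s)
    (t : ℕ) :
    ∃ b c : (ZMod (p ^ a))[X] ⧸ Ideal.span {(X : (ZMod (p ^ a))[X]) ^ p ^ s + 1},
      IsUnit b ∧ ((p : (ZMod (p ^ a))[X] ⧸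
          Ideal.span {(X : (ZMod (p ^ a))[X]) ^ p ^ s + 1}) ^ (t + 2)) ∣ c ∧
        (Ideal.Quotient.mk (Ideal.span {(X : (ZMod (p ^ a))[X]) ^ p ^ s + 1})
            (X + 1)) ^ (p ^ s + t * (p - 1) * p ^ (s - 1)) =
          (p : (ZMod (p ^ a))[X] ⧸
            Ideal.span {(X : (ZMod (p ^ a))[X]) ^ p ^ s + 1}) ^ (t + 1) * b *
            (Ideal.Quotient.mk (Ideal.span {(X : (ZMod (p ^ a))[X]) ^ p ^ s + 1})
              (X + 1)) ^ (p ^ (s - 1)) + c := by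
  classical
  set J : Ideal ((ZMod (p ^ a))[X]) := Ideal.span {(X : (ZMod (p ^ a))[X]) ^ p ^ s + 1} with hJ
  set x : (ZMod (p ^ a))[X] ⧸ J := Ideal.Quotient.mk J X with hxdef
  obtain ⟨B, C0, hEq, hBe⟩ := lemma1 hp hodd hs
  have hx0 : x ^ p ^ s + 1 = 0 := by
    have hmem : (X : (ZMod (p^a))[X])^(p^s) + 1 ∈ J := Ideal.subset_span rfl
    have := Ideal.Quotient.eq_zero_iff_mem.2 hmem
    simpa [hxdef, map_add, map_pow, map_one] using this
  set b0 : (ZMod (p ^ a))[X] ⧸ J := Polynomial.aeval x B with hb0def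
  set h0 : (ZMod (p ^ a))[X] ⧸ J := Polynomial.aeval x C0 with hh0def
  have key : (x+1)^(p^s) = (p : (ZMod (p ^ a))[X] ⧸ J) * b0 * (x+1)^(p^(s-1))
      + (p : (ZMod (p ^ a))[X] ⧸ J)^2 * h0 := by
    have h := congrArg (Polynomial.aeval x) hEq
    simp only [map_add, map_mul, map_pow, map_one, Polynomial.aeval_X, Polynomial.aeval_C] at h
    push_cast at h
    linear_combination h + hx0
  have hpQa : (p : (ZMod (p ^ a))[X] ⧸ J)^a = 0 := by
    have h1 : ((p^a : ℕ) : (ZMod (p^a))[X]) = 0 := by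
      rw [← Polynomial.C_eq_natCast]
      simp [ZMod.natCast_self]
    calc (p : (ZMod (p ^ a))[X] ⧸ J)^a = ((p^a : ℕ) : (ZMod (p ^ a))[X] ⧸ J) := by push_cast; ring
      _ = Ideal.Quotient.mk J ((p^a : ℕ) : (ZMod (p^a))[X]) := by rw [map_natCast]
      _ = 0 := by rw [h1, map_zero]
  have hxnil : IsNilpotent (x + 1) := by
    have key2 : (x+1)^(p^s) = (p : (ZMod (p ^ a))[X] ⧸ J) *
        (b0 * (x+1)^(p^(s-1)) + (p : (ZMod (p ^ a))[X] ⧸ J) * h0) := by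
      linear_combination key
    exact ⟨p^s * a, by rw [pow_mul, key2, mul_pow, hpQa, zero_mul]⟩
  have hnilpow : ∀ n : ℕ, n ≠ 0 → IsNilpotent ((x+1)^n) := by
    intro n hn
    obtain ⟨k, hk⟩ := hxnil
    exact ⟨k, by rw [← pow_mul, mul_comm, pow_mul, hk, zero_pow hn]⟩
  have hb0 : IsUnit b0 := by
    have hBd : (X + 1 : ℤ[X]) ∣ (B + 1) := by
      have h : (X - Polynomial.C (-1 : ℤ)) ∣ (B + 1) :=
        (Polynomial.dvd_iff_isRoot).2 (by simp [Polynomial.IsRoot, hBe])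
      simpa [sub_neg_eq_add] using h
    obtain ⟨D, hD⟩ := hBd
    have hb0eq : b0 = (-1 : (ZMod (p ^ a))[X] ⧸ J) + (x+1) * (Polynomial.aeval x D) := by
      have h := congrArg (Polynomial.aeval x) hD
      simp only [map_add, map_mul, map_one, Polynomial.aeval_X] at h
      linear_combination h
    rw [hb0eq]
    exact IsNilpotent.isUnit_add_left_of_commute
      ((Commute.all _ _).isNilpotent_mul_right hxnil) (IsUnit.of_mul_eq_one (a := (-1 : (ZMod (p ^ a))[X] ⧸ J)) (-1) (by ring)) (Commute.all _ _)
  have e3 : p^(s-1) + (p-1)*p^(s-1) = p^s := by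
    have h2 : 2 ≤ p := hp.two_le
    have h1 : 1 + (p-1) = p := by omega
    calc p^(s-1) + (p-1)*p^(s-1) = (1 + (p-1)) * p^(s-1) := by ring
      _ = p * p^(s-1) := by rw [h1]
      _ = p^(s-1+1) := (pow_succ' p (s-1)).symm
      _ = p^s := by rw [Nat.sub_add_cancel hs]
  have e2 : (p-1)*p^(s-1) = (p-2)*p^(s-1) + p^(s-1) := by
    have h3 : 3 ≤ p := by rcases hp.two_le.lt_or_eq with h | h; omega; omega
    have : p - 1 = (p-2) + 1 := by omega
    rw [this]; ring
  have main : ∀ u : ℕ, ∃ b h : (ZMod (p ^ a))[X] ⧸ J, IsUnit b ∧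
      (x+1)^(p^s + u*(p-1)*p^(s-1)) = (p : (ZMod (p ^ a))[X] ⧸ J)^(u+1) * b * (x+1)^(p^(s-1))
        + (p : (ZMod (p ^ a))[X] ⧸ J)^(u+2) * h := by
    intro u
    induction u with
    | zero => exact ⟨b0, h0, hb0, by simpa using key⟩
    | succ u ih =>
      obtain ⟨b, h, hb, he⟩ := ih
      refine ⟨b * b0 + h * (x+1)^((p-2)*p^(s-1)), b * h0, ?_, ?_⟩
      · refine IsNilpotent.isUnit_add_left_of_commute
          ((Commute.all _ _).isNilpotent_mul_left ?_) (hb.mul hb0) (Commute.all _ _)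
        have h3 : 3 ≤ p := by rcases hp.two_le.lt_or_eq with h' | h'; omega; omega
        exact hnilpow _ (Nat.mul_ne_zero (by omega) (pow_ne_zero _ hp.ne_zero))
      · have eexp : p^s + (u+1)*(p-1)*p^(s-1) = (p^s + u*(p-1)*p^(s-1)) + (p-1)*p^(s-1) := by
          ring
        have he3 : ((x:(ZMod (p ^ a))[X] ⧸ J)+1)^(p^(s-1)) * (x+1)^((p-1)*p^(s-1))
            = (x+1)^(p^s) := by rw [← pow_add, e3]
        have he2 : ((x:(ZMod (p ^ a))[X] ⧸ J)+1)^((p-1)*p^(s-1))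
            = (x+1)^((p-2)*p^(s-1)) * (x+1)^(p^(s-1)) := by rw [← pow_add, ← e2]
        rw [eexp, pow_add, he]
        linear_combination ((p : (ZMod (p ^ a))[X] ⧸ J)^(u+1) * b) * he3
          + ((p : (ZMod (p ^ a))[X] ⧸ J)^(u+1) * b) * key
          + ((p : (ZMod (p ^ a))[X] ⧸ J)^(u+2) * h) * he2
  obtain ⟨b, h, hb, heq⟩ := main t
  refine ⟨b, (p : (ZMod (p ^ a))[X] ⧸ J)^(t+2) * h, hb, dvd_mul_right _ _, ?_⟩
  have hmk : Ideal.Quotient.mk J (X + 1) = x + 1 := by simp [hxdef]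
  rw [hmk]
  exact heq
end

section
/- Let $p$ be an odd prime, $a > 1$, $s \geq 1$, and $R = \mathbb{Z}_{p^a}[x]/\langle x^{p^s}+1 \rangle$. Then the nilpotency index of $x+1$ in $R$ is exactly $p^s a - p^{s-1}(a-1)$; that is, $(x+1)^{p^s a - p^{s-1}(a-1)} = 0$ and $(x+1)^{p^s a - p^{s-1}(a-1) - 1} \neq 0$. -/
open Polynomial
set_option maxHeartbeats 1000000

lemma intCp_dvd (p : ℕ) [Fact p.Prime] (g : Polynomial ℤ)
    (h : g.map (Int.castRingHom (ZMod p)) = 0) : ∃ h', g = C (p:ℤ) * h' := by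
  have : C (p:ℤ) ∣ g := by
    rw [C_dvd_iff_dvd_coeff]
    intro i
    have := congrArg (fun q => Polynomial.coeff q i) h
    simp [coeff_map] at this
    exact_mod_cast (ZMod.intCast_zmod_eq_zero_iff_dvd _ _).1 this
  obtain ⟨h', hh⟩ := this
  exact ⟨h', hh⟩

-- The key s=1 identity with E(-1) = -1
lemma key1 (p : ℕ) [Fact p.Prime] (hodd : p ≠ 2) :
    ∃ E : Polynomial ℤ, (X + 1)^p = X^p + 1 + C (p:ℤ) * (X + 1) * E ∧ E.eval (-1) = -1 := by
  have hp := (Fact.out : p.Prime)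
  have hp3 : 3 ≤ p := hp.two_le.lt_of_ne (Ne.symm hodd)
  have hoddp : Odd p := hp.odd_of_ne_two hodd
  -- g := (X+1)^p - X^p - 1
  set g : Polynomial ℤ := (X + 1)^p - X^p - 1 with hg
  have hmap : g.map (Int.castRingHom (ZMod p)) = 0 := by
    simp [hg, Polynomial.map_pow, add_pow_char]
  obtain ⟨h', hh⟩ := intCp_dvd p g hmap
  -- (X+1) ∣ h'
  have hroot : h'.eval (-1) = 0 := by
    have : g.eval (-1) = 0 := by
      simp [hg, hoddp.neg_one_pow, hp.ne_zero]
    rw [hh] at this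
    simp at this
    rcases this with h | h
    · omega
    · exact h
  have hdvd : (X + 1 : Polynomial ℤ) ∣ h' := by
    have := (dvd_iff_isRoot (p := h') (a := (-1:ℤ))).2 hroot
    simpa [sub_neg_eq_add] using this
  obtain ⟨E, hE⟩ := hdvd
  refine ⟨E, ?_, ?_⟩
  · have : g = C (p:ℤ) * (X+1) * E := by rw [hh, hE]; ring
    rw [hg] at this; linear_combination this
  · -- derivative argument
    have hder : derivative g = C (p:ℤ) * ((X+1) * derivative E + E) := by
      rw [hh, hE]; simp [mul_comm, mul_assoc, mul_left_comm]; ring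
    have h1 : (derivative g).eval (-1) = (p:ℤ) * E.eval (-1) := by
      rw [hder]; simp
    have h2 : (derivative g).eval (-1) = -(p:ℤ) := by
      rw [hg]
      simp [derivative_pow]
      rw [zero_pow (by omega), (Nat.Odd.sub_odd hoddp odd_one).neg_one_pow]
      ring
    have heq := h1.symm.trans h2
    have hpne : (p:ℤ) ≠ 0 := by exact_mod_cast hp.ne_zero
    have : (p:ℤ) * E.eval (-1) = (p:ℤ) * (-1) := by rw [heq]; ring
    exact mul_left_cancel₀ hpne this

lemma key2 (p m : ℕ) [Fact p.Prime] (hodd : p ≠ 2) :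
    ∃ M : Polynomial ℤ, (X + 1)^(p^m) = X^(p^m) + 1 + C (p:ℤ) * (X + 1) * M := by
  have hp := (Fact.out : p.Prime)
  have hoddp : Odd p := hp.odd_of_ne_two hodd
  have hoddq : Odd (p^m) := hoddp.pow
  set g : Polynomial ℤ := (X + 1)^(p^m) - X^(p^m) - 1 with hg
  have hmap : g.map (Int.castRingHom (ZMod p)) = 0 := by
    simp [hg, Polynomial.map_pow, add_pow_char_pow]
  obtain ⟨h', hh⟩ := intCp_dvd p g hmap
  have hroot : h'.eval (-1) = 0 := by
    have h0 : g.eval (-1) = 0 := by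
      simp [hg, hoddq.neg_one_pow, hp.ne_zero, pow_eq_zero_iff]
    rw [hh] at h0
    simp at h0
    rcases h0 with h | h
    · exact absurd h (by exact_mod_cast hp.ne_zero)
    · exact h
  have hdvd : (X + 1 : Polynomial ℤ) ∣ h' := by
    have := (dvd_iff_isRoot (p := h') (a := (-1:ℤ))).2 hroot
    simpa [sub_neg_eq_add] using this
  obtain ⟨M, hM⟩ := hdvd
  refine ⟨M, ?_⟩
  have : g = C (p:ℤ) * (X+1) * M := by rw [hh, hM]; ring
  rw [hg] at this; linear_combination this

lemma keyIdentities (p s : ℕ) [Fact p.Prime] (hodd : p ≠ 2) (hs : 1 ≤ s) :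
    ∃ Es M c : Polynomial ℤ,
      (X^(p^(s-1)) + 1)^p = X^(p^s) + 1 + C (p:ℤ) * (X^(p^(s-1)) + 1) * Es ∧
      (X + 1)^(p^(s-1)) = X^(p^(s-1)) + 1 + C (p:ℤ) * (X + 1) * M ∧
      Es = (X + 1) * c - 1 := by
  have hp := (Fact.out : p.Prime)
  have hoddp : Odd p := hp.odd_of_ne_two hodd
  obtain ⟨E, hE, hEval⟩ := key1 p hodd
  obtain ⟨M, hM⟩ := key2 p (s-1) hodd
  set m := p^(s-1) with hm
  have hmp : m * p = p ^ s := by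
    rw [hm, ← pow_succ]
    congr 1; omega
  have hid1 : (X^m + 1 : Polynomial ℤ)^p
      = X^(p^s) + 1 + C (p:ℤ) * (X^m + 1) * (E.comp (X^m)) := by
    have h2 := congrArg (fun q => q.comp (X^m : Polynomial ℤ)) hE
    simp only [add_comp, pow_comp, X_comp, one_comp, mul_comp, C_comp] at h2
    rw [← pow_mul, hmp] at h2
    exact h2
  have hoddm : Odd m := hoddp.pow
  have hev : (E.comp (X^m)).eval (-1) = -1 := by
    rw [eval_comp]
    simp [hoddm.neg_one_pow, hEval]
  have hroot : (E.comp (X^m) + 1).eval (-1) = 0 := by simp [hev]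
  have hdvd : (X + 1 : Polynomial ℤ) ∣ (E.comp (X^m) + 1) := by
    have := (dvd_iff_isRoot (p := E.comp (X^m) + 1) (a := (-1:ℤ))).2 hroot
    simpa [sub_neg_eq_add] using this
  obtain ⟨c, hc⟩ := hdvd
  exact ⟨E.comp (X^m), M, c, hid1, hM, by linear_combination hc⟩

lemma arith1 (p a e q : ℕ) (hp : 1 ≤ p) (ha : 1 ≤ a) (hep : e * p = q) :
    q * a - e * (a - 1) = e * (a * (p - 1) + 1) := by
  subst hep
  obtain ⟨a1, rfl⟩ : ∃ a1, a = a1 + 1 := ⟨a - 1, by omega⟩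
  obtain ⟨p1, rfl⟩ : ∃ p1, p = p1 + 1 := ⟨p - 1, by omega⟩
  simp only [Nat.add_sub_cancel]
  have key : e * (p1+1) * (a1+1) = e * ((a1+1)*p1 + 1) + e * a1 := by ring
  omega

theorem stmt11 (p a s : ℕ) (hp : p.Prime) (hodd : p ≠ 2) (ha : 1 < a) (hs : 1 ≤ s) :
    (Ideal.Quotient.mk (Ideal.span {(X : (ZMod (p ^ a))[X]) ^ p ^ s + 1})
        (X + 1)) ^ (p ^ s * a - p ^ (s - 1) * (a - 1)) = 0 ∧
      (Ideal.Quotient.mk (Ideal.span {(X : (ZMod (p ^ a))[X]) ^ p ^ s + 1})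
        (X + 1)) ^ (p ^ s * a - p ^ (s - 1) * (a - 1) - 1) ≠ 0 := by
  haveI : Fact p.Prime := ⟨hp⟩
  have hp3 : 3 ≤ p := hp.two_le.lt_of_ne (Ne.symm hodd)
  haveI : NeZero (p ^ a) := ⟨pow_ne_zero _ hp.ne_zero⟩
  set A := ZMod (p ^ a) with hA
  set F : A[X] := X ^ p ^ s + 1 with hF
  set I : Ideal A[X] := Ideal.span {F} with hI
  set mk' : A[X] →+* (A[X] ⧸ I) := Ideal.Quotient.mk I with hmk
  set e := p ^ (s - 1) with he
  have he1 : 1 ≤ e := Nat.one_le_iff_ne_zero.mpr (pow_ne_zero _ hp.ne_zero)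
  have hep : e * p = p ^ s := by rw [he, ← pow_succ]; congr 1; omega
  set n := a * (p - 1) + 1 with hn
  have hNe : p ^ s * a - e * (a - 1) = e * n :=
    arith1 p a e (p^s) (by omega) (by omega) hep
  set θ : Polynomial ℤ →+* (A[X] ⧸ I) := mk'.comp (mapRingHom (Int.castRingHom A)) with hθ
  obtain ⟨Es, M, c, hid1, hid2, hid3⟩ := keyIdentities p s hodd hs
  set x : A[X] ⧸ I := mk' X with hx
  set u : A[X] ⧸ I := mk' (X + 1) with hu
  have hu' : x + 1 = u := by rw [hu, map_add, map_one]
  set w : A[X] ⧸ I := x ^ e + 1 with hw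
  set ε : A[X] ⧸ I := θ Es with hε
  set μ : A[X] ⧸ I := θ M with hμ
  set γ : A[X] ⧸ I := θ c with hγ
  have hmkF : mk' F = 0 :=
    Ideal.Quotient.eq_zero_iff_mem.mpr (Ideal.subset_span (Set.mem_singleton F))
  have hX0 : x ^ p ^ s + 1 = 0 := by
    rw [hx, ← map_pow, ← map_one mk', ← map_add, ← hF, hmkF]
  have hθC : θ (C (p : ℤ)) = (p : A[X] ⧸ I) := by
    rw [show (C (p:ℤ)) = ((p : ℕ) : Polynomial ℤ) by simp, map_natCast]
  have hθX : θ X = x := by rw [hθ]; simp [hx]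
  -- key identity A : w ^ p = p * w * ε
  have hA1 : w ^ p = (p : A[X] ⧸ I) * w * ε := by
    have h0 := congrArg θ hid1
    simp only [map_add, map_mul, map_pow, map_one, hθC, hθX, ← he] at h0
    rw [hX0] at h0
    rw [hw, hε, h0]
    ring
  -- key identity B : u ^ e = w + p * u * μ
  have hB1 : u ^ e = w + (p : A[X] ⧸ I) * u * μ := by
    have h0 := congrArg θ hid2
    simp only [map_add, map_mul, map_pow, map_one, hθC, hθX, ← he, hu'] at h0
    rw [hw, hμ, h0]
  have hC1 : ε = u * γ - 1 := by
    have h0 := congrArg θ hid3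
    simp only [map_sub, map_mul, map_add, map_one, hθX, hu'] at h0
    rw [hε, hγ, h0]
  have hqa : (p : A[X] ⧸ I) ^ a = 0 := by
    have h1 : ((p : A[X])) ^ a = 0 := by
      rw [← Nat.cast_pow, ← map_natCast (C : A →+* A[X]), ZMod.natCast_self, map_zero]
    calc (p : A[X] ⧸ I) ^ a = mk' ((p : A[X]) ^ a) := by rw [map_pow, map_natCast]
    _ = 0 := by rw [h1, map_zero]
  have hwk : ∀ k : ℕ, w ^ (1 + k * (p - 1)) = (p : A[X] ⧸ I) ^ k * ε ^ k * w := by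
    intro k
    induction k with
    | zero => simp
    | succ k ih =>
      have h1 : 1 + (k+1) * (p - 1) = (1 + k * (p-1)) + (p-1) := by ring
      have h2 : w * w ^ (p - 1) = w ^ p := by
        rw [← pow_succ']; congr 1; omega
      rw [h1, pow_add, ih]
      calc (p : A[X] ⧸ I) ^ k * ε ^ k * w * w ^ (p-1)
          = (p : A[X] ⧸ I) ^ k * ε ^ k * (w * w ^ (p-1)) := by ring
      _ = (p : A[X] ⧸ I) ^ k * ε ^ k * ((p : A[X] ⧸ I) * w * ε) := by rw [h2, hA1]
      _ = (p : A[X] ⧸ I) ^ (k+1) * ε ^ (k+1) * w := by ring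
  -- VANISHING
  have hvanish : u ^ (p ^ s * a - e * (a-1)) = 0 := by
    rw [hNe, pow_mul, hB1, add_pow]
    apply Finset.sum_eq_zero
    intro k hk
    simp only [Finset.mem_range] at hk
    set Cnk : A[X] ⧸ I := ((n.choose k : ℕ) : A[X] ⧸ I) with hCnk
    set i := n - k with hi
    by_cases hcase : a ≤ i
    · obtain ⟨d, hd⟩ : ∃ d, i = a + d := ⟨i - a, by omega⟩
      have h3 : ((p : A[X] ⧸ I) * u * μ) ^ i = (p : A[X] ⧸ I)^a * ((p : A[X] ⧸ I)^d * u^i * μ^i) := by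
        rw [mul_pow, mul_pow, hd]
        ring
      rw [h3, hqa]
      ring
    · push_neg at hcase
      have hile : i ≤ i * (p-1) := Nat.le_mul_of_pos_right i (by omega)
      have hsplit : (a - i) * (p-1) + i * (p-1) = a * (p-1) := by
        rw [← Nat.add_mul]; congr 1; omega
      obtain ⟨r, hr⟩ : ∃ r, k = (1 + (a - i) * (p-1)) + r := ⟨k - (1 + (a-i)*(p-1)), by omega⟩
      obtain ⟨b, hb⟩ : ∃ b, a - i = b := ⟨a - i, rfl⟩
      have hq' : (p : A[X] ⧸ I)^b * (p : A[X] ⧸ I)^i = 0 := by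
        rw [← pow_add, show b + i = a by omega, hqa]
      rw [hr, hb, pow_add, hwk b, mul_pow, mul_pow]
      linear_combination (ε^b * w * w^r * u^i * μ^i * Cnk) * hq'
  -- ============ NON-VANISHING ============
  set m2 := a * (p - 1) with hm2
  have hnm2 : n = m2 + 1 := rfl
  have hN1 : p ^ s * a - e * (a-1) - 1 = (e-1) + e * m2 := by
    have h4 : e * n = e * m2 + e := by rw [hn, hm2]; ring
    omega
  -- the element G
  set G : A[X] ⧸ I := ∑ k ∈ Finset.range (m2+1),
      (if m2 - k < a then
        ε^(a-1-(m2-k)) * w^(1+((m2-k)+1)*(p-2)) * u^(e-1+(m2-k)) * μ^(m2-k)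
          * ((m2.choose k : ℕ) : A[X] ⧸ I)
      else 0) with hG
  have hkey : u ^ (p ^ s * a - e * (a-1) - 1) = (p : A[X] ⧸ I)^(a-1) * G := by
    rw [hN1, pow_add, pow_mul, hB1, add_pow, Finset.mul_sum, hG, Finset.mul_sum]
    apply Finset.sum_congr rfl
    intro k hk
    simp only [Finset.mem_range] at hk
    set Cnk : A[X] ⧸ I := ((m2.choose k : ℕ) : A[X] ⧸ I) with hCnk
    obtain ⟨i, hik⟩ : ∃ i, m2 = k + i := ⟨m2 - k, by omega⟩
    rw [hik, Nat.add_sub_cancel_left]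
    by_cases hcase : a ≤ i
    · rw [if_neg (by omega)]
      obtain ⟨d, hd⟩ : ∃ d, i = a + d := ⟨i - a, by omega⟩
      rw [mul_pow, mul_pow, hd]
      linear_combination (u^(e-1) * w^k * (p : A[X] ⧸ I)^d * u^(a+d) * μ^(a+d) * Cnk) * hqa
    · push_neg at hcase
      rw [if_pos hcase]
      have hile : i ≤ i * (p-1) := Nat.le_mul_of_pos_right i (by omega)
      obtain ⟨b, hb⟩ : ∃ b, a - 1 - i = b := ⟨a-1-i, rfl⟩
      have t1 : b * (p-1) + i * (p-1) = (a-1) * (p-1) := by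
        rw [← hb, ← Nat.add_mul]; congr 1; omega
      have t2 : (a-1) * (p-1) + (p-1) = a * (p-1) := by
        rw [← Nat.succ_mul]; congr 1; omega
      have t3 : (i+1)*(p-2) + (i+1) = (i+1)*(p-1) := by
        rw [← Nat.mul_succ]; congr 1; omega
      have t4 : (i+1)*(p-1) = i*(p-1) + (p-1) := by rw [Nat.succ_mul]
      have hk2 : k = (1 + b * (p-1)) + (i+1)*(p-2) := by omega
      rw [hk2, pow_add, hwk b, hb, show a - 1 = b + i by omega, mul_pow, mul_pow]
      ring
  -- reduction mod p
  set B := ZMod p with hB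
  haveI : Fact (1 < p) := ⟨hp.one_lt⟩
  set F2 : B[X] := X ^ p ^ s + 1 with hF2
  set I2 : Ideal B[X] := Ideal.span {F2} with hI2
  set mk2 : B[X] →+* (B[X] ⧸ I2) := Ideal.Quotient.mk I2 with hmk2
  have hdvdpa : p ∣ p ^ a := dvd_pow_self p (by omega)
  set ρ : A[X] →+* B[X] := mapRingHom (ZMod.castHom hdvdpa B) with hρ
  have hρF : ρ F = F2 := by
    rw [hρ, hF, hF2]
    simp [Polynomial.map_pow]
  have hmk2F2 : mk2 F2 = 0 :=
    Ideal.Quotient.eq_zero_iff_mem.mpr (Ideal.subset_span (Set.mem_singleton F2))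
  have hker : ∀ f ∈ I, (mk2.comp ρ) f = 0 := by
    intro f hf
    rw [hI, Ideal.mem_span_singleton] at hf
    obtain ⟨g, rfl⟩ := hf
    rw [map_mul, RingHom.comp_apply, hρF]
    rw [show mk2 F2 = 0 from hmk2F2]
    ring
  set φ : (A[X] ⧸ I) →+* (B[X] ⧸ I2) := Ideal.Quotient.lift I (mk2.comp ρ) hker with hφ
  have hφmk : ∀ g : A[X], φ (mk' g) = mk2 (g.map (ZMod.castHom hdvdpa B)) := by
    intro g
    rw [hφ, hmk]
    exact Ideal.Quotient.lift_mk _ _ _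
  have hfrob : ∀ m : ℕ, ((X : B[X]) + 1)^(p^m) = X^(p^m) + 1 := by
    intro m
    rw [add_pow_char_pow, one_pow]
  set x2 : B[X] ⧸ I2 := mk2 X with hx2
  set u2 : B[X] ⧸ I2 := mk2 (X+1) with hu2
  have hpspos : 0 < p ^ s := pow_pos (by omega) s
  have hu2q : u2 ^ (p^s) = 0 := by
    rw [hu2, ← map_pow, hfrob s, ← hF2, hmk2F2]
  have hφu : φ u = u2 := by
    rw [hu, hφmk]
    simp [hu2]
  have hφx : φ x = x2 := by
    rw [hx, hφmk]
    simp [hx2]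
  have hφw : φ w = u2 ^ e := by
    have h6 : φ w = x2 ^ e + 1 := by
      rw [hw, map_add, map_pow, hφx, map_one]
    have h7 : ((X:B[X])+1)^e = X^e + 1 := by rw [he]; exact hfrob (s-1)
    rw [h6, hx2, hu2, ← map_pow, ← map_pow, h7, map_add, map_one]
  have hφp : (φ ((p:ℕ) : A[X] ⧸ I)) = 0 := by
    rw [map_natCast, ← map_natCast mk2, ← map_natCast (C : B →+* B[X]), ZMod.natCast_self,
      map_zero, map_zero]
  have hφε : φ ε = u2 * (φ γ) - 1 := by
    rw [hC1, map_sub, map_mul, map_one, hφu]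
  -- computing φ G
  have hφG : φ G = (φ ε) ^ (a-1) * u2 ^ (p^s - 1) := by
    rw [hG, map_sum]
    rw [Finset.sum_eq_single_of_mem m2 (Finset.self_mem_range_succ m2)]
    · rw [Nat.sub_self, if_pos (by omega), Nat.choose_self]
      simp only [pow_zero, mul_one, Nat.cast_one, map_mul, map_pow, hφw, hφu, Nat.sub_zero,
        Nat.add_zero, map_one]
      rw [← pow_mul, mul_assoc, ← pow_add]
      have d2 : e*(p-1) + e = e*p := by rw [← Nat.mul_succ]; congr 1; omega
      have d3 : e*(1+(0+1)*(p-2)) = e*(p-1) := by congr 1; omega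
      congr 2
      omega
    · intro k hkr hkne
      simp only [Finset.mem_range] at hkr
      obtain ⟨i, hik, hi1⟩ : ∃ i, m2 = k + i ∧ 1 ≤ i := ⟨m2 - k, by omega, by omega⟩
      rw [show m2 - k = i by omega]
      by_cases hia : i < a
      · rw [if_pos hia]
        simp only [map_mul, map_pow, hφw, hφu, map_natCast]
        have hzero : ((u2^e)^(1+(i+1)*(p-2))) * u2^(e-1+i) = 0 := by
          rw [← pow_mul, ← pow_add]
          have c2 : 2*(p-2) ≤ (i+1)*(p-2) := Nat.mul_le_mul_right _ (by omega)
          have d1 : e*(p-1) ≤ e*(1+(i+1)*(p-2)) := Nat.mul_le_mul_left _ (by omega)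
          have d2 : e*(p-1) + e = e*p := by rw [← Nat.mul_succ]; congr 1; omega
          obtain ⟨r2, hr2⟩ : ∃ r2, e*(1+(i+1)*(p-2)) + (e-1+i) = p^s + r2 :=
            ⟨e*(1+(i+1)*(p-2)) + (e-1+i) - p^s, by omega⟩
          rw [hr2, pow_add, hu2q, zero_mul]
        linear_combination ((φ ε)^(a-1-i) * (φ μ)^i * ((m2.choose k : ℕ) : B[X] ⧸ I2)) * hzero
      · rw [if_neg hia, map_zero]
  -- sign lemma
  have hsign : ∀ k : ℕ, (u2 * (φ γ) - 1)^k * u2^(p^s - 1) = (-1)^k * u2^(p^s-1) := by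
    intro k
    induction k with
    | zero => simp
    | succ k ih =>
      have hz : u2 * u2^(p^s-1) = 0 := by
        rw [← pow_succ', show p^s - 1 + 1 = p^s by omega, hu2q]
      linear_combination (u2 * (φ γ) - 1) * ih + ((-1:B[X] ⧸ I2)^k * (φ γ)) * hz
  -- u2^(p^s-1) ≠ 0
  have hmon : ((X:B[X])+1).Monic := by simpa using monic_X_add_C (1:B)
  have hndeg : ((X:B[X])+1).natDegree = 1 := by simpa using natDegree_X_add_C (1:B)
  have hu2ne : u2^(p^s - 1) ≠ 0 := by
    intro h0
    rw [hu2, ← map_pow] at h0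
    have hmem := Ideal.Quotient.eq_zero_iff_mem.mp h0
    rw [hI2, Ideal.mem_span_singleton] at hmem
    have hF2eq : F2 = ((X:B[X])+1)^(p^s) := by rw [hF2, hfrob s]
    rw [hF2eq] at hmem
    refine (hmon.pow _).not_dvd_of_natDegree_lt ((hmon.pow _).ne_zero) ?_ hmem
    rw [natDegree_pow, natDegree_pow, hndeg]
    omega
  -- conclusion
  refine ⟨hvanish, ?_⟩
  intro hcontra
  rw [hkey] at hcontra
  obtain ⟨g, hg⟩ := Ideal.Quotient.mk_surjective (I := I) G
  have hCp : C ((p:A)^(a-1)) = ((p:ℕ) : A[X])^(a-1) := by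
    rw [map_pow, Polynomial.C_eq_natCast]
  have hmem : F ∣ ((p:ℕ) : A[X])^(a-1) * g := by
    rw [← Ideal.mem_span_singleton, ← hI, ← Ideal.Quotient.eq_zero_iff_mem, ← hmk,
      map_mul, map_pow, map_natCast, hg]
    exact hcontra
  have hFm : F.Monic := by
    rw [hF, ← C_1]
    exact monic_X_pow_add_C _ hpspos.ne'
  set r := g %ₘ F with hr
  have hdec : r + F * (g /ₘ F) = g := modByMonic_add_div g F
  have hdvd2 : F ∣ C ((p:A)^(a-1)) * r := by
    have h5 : C ((p:A)^(a-1)) * r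
        = ((p:ℕ) : A[X])^(a-1) * g - F * (((p:ℕ) : A[X])^(a-1) * (g /ₘ F)) := by
      rw [hCp]
      linear_combination (((p:ℕ) : A[X])^(a-1)) * hdec
    rw [h5]
    exact dvd_sub hmem (Dvd.intro _ rfl)
  haveI : Fact (1 < p ^ a) := ⟨Nat.one_lt_pow (by omega) (by omega)⟩
  have hrz : C ((p:A)^(a-1)) * r = 0 := by
    by_contra h0
    have hdegC : degree (C ((p:A)^(a-1))) ≤ 0 := degree_C_le
    have hlt : degree (C ((p:A)^(a-1)) * r) < degree F :=
      lt_of_le_of_lt ((degree_mul_le _ _).trans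
        (by simpa using add_le_add_left hdegC (degree r))) (degree_modByMonic_lt g hFm)
    exact hFm.not_dvd_of_degree_lt h0 hlt hdvd2
  have hrcast : r.map (ZMod.castHom hdvdpa B) = 0 := by
    apply Polynomial.ext
    intro nn
    rw [coeff_map, coeff_zero]
    have hcc : (p:A)^(a-1) * r.coeff nn = 0 := by
      have h7 := congrArg (fun q => Polynomial.coeff q nn) hrz
      simpa only [coeff_C_mul, coeff_zero] using h7
    have hzval : r.coeff nn = (((r.coeff nn).val : ℕ) : A) := by
      rw [ZMod.natCast_val, ZMod.cast_id]
    have hz1 : ((p^(a-1) * (r.coeff nn).val : ℕ) : A) = 0 := by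
      have h10 := congrArg (fun t => ((p^(a-1) : ℕ) : A) * t) hzval
      calc ((p^(a-1) * (r.coeff nn).val : ℕ) : A)
          = ((p^(a-1):ℕ):A) * (((r.coeff nn).val:ℕ):A) := by rw [Nat.cast_mul]
      _ = ((p^(a-1):ℕ):A) * (r.coeff nn) := h10.symm
      _ = 0 := by
          rw [show ((p^(a-1):ℕ):A) = (p:A)^(a-1) by rw [Nat.cast_pow]]
          exact hcc
    have hz2 : p^a ∣ p^(a-1) * (r.coeff nn).val :=
      (ZMod.natCast_eq_zero_iff (p^(a-1) * (r.coeff nn).val) (p^a)).mp hz1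
    have hz3 : p ∣ (r.coeff nn).val := by
      obtain ⟨t, ht⟩ := hz2
      have hpa : p^a = p^(a-1) * p := by rw [← pow_succ]; congr 1; omega
      have ht2 : p^(a-1) * (r.coeff nn).val = p^(a-1) * (p * t) := by
        rw [ht, hpa]; ring
      exact ⟨t, Nat.eq_of_mul_eq_mul_left (pow_pos (by omega) _) ht2⟩
    have hcast2 : (ZMod.castHom hdvdpa B) (r.coeff nn) = (((r.coeff nn).val : ℕ) : B) := by
      have h9 := congrArg (ZMod.castHom hdvdpa B) hzval
      rw [map_natCast] at h9
      exact h9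
    rw [hcast2]
    exact (ZMod.natCast_eq_zero_iff (r.coeff nn).val p).mpr hz3
  have hFmap : F.map (ZMod.castHom hdvdpa B) = F2 := hρF
  have hφG0 : φ G = 0 := by
    rw [← hg, hφmk, ← hdec, Polynomial.map_add, Polynomial.map_mul, hrcast, hFmap,
      zero_add, map_mul, hmk2F2, zero_mul]
  rw [hφG, hφε, hsign (a-1)] at hφG0
  apply hu2ne
  have h8 : ((-1 : B[X] ⧸ I2))^(a-1) * ((-1 : B[X] ⧸ I2)^(a-1) * u2^(p^s-1)) = 0 := by
    rw [hφG0, mul_zero]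
  rw [← mul_assoc, ← mul_pow,
    show ((-1 : B[X] ⧸ I2) * (-1)) = 1 by norm_num, one_pow, one_mul] at h8
  exact h8
end

section
/- Let $p$ be an odd prime, $a > 1$, $s \geq 1$, and $R = \mathbb{Z}_{p^a}[x]/\langle x^{p^s}+1 \rangle$. Then every ideal of $R$ can be generated by at most $a$ elements. -/
open Polynomial


theorem key {B : Type*} [CommRing B] (p : ℕ)
    (hmodp : ∀ K : Ideal B, ∃ g ∈ K, ∀ u ∈ K, ∃ h, u - h * g ∈ Ideal.span {(p:B)}) :
    ∀ n : ℕ, ∀ I : Ideal B, ∃ S : Finset B, S.card ≤ n ∧ Ideal.span (S : Set B) ≤ I ∧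
      I ≤ Ideal.span (S : Set B) ⊔ Ideal.span {(p:B)^n} := by
  classical
  intro n
  induction n with
  | zero =>
    intro I
    exact ⟨∅, by simp, by simp, by simp [Ideal.span_singleton_one]⟩
  | succ n ih =>
    intro I
    obtain ⟨g, hgI, hg⟩ := hmodp I
    obtain ⟨T, hTcard, hTle, hTge⟩ := ih (I.colon (Ideal.span {(p:B)}))
    refine ⟨insert g (T.image (fun t => (p:B) * t)), ?_, ?_, ?_⟩
    · exact (Finset.card_insert_le _ _).trans
        (Nat.succ_le_succ (Finset.card_image_le.trans hTcard))
    · rw [Ideal.span_le]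
      intro x hx
      simp only [Finset.coe_insert, Set.mem_insert_iff, Finset.coe_image, Set.mem_image,
        Finset.mem_coe] at hx
      rcases hx with rfl | ⟨t, ht, rfl⟩
      · exact hgI
      · have htJ : t ∈ I.colon (Ideal.span {(p:B)}) :=
          hTle (Ideal.subset_span ht)
        have := Ideal.mem_colon_span_singleton.mp htJ
        simpa [mul_comm] using this
    · intro u hu
      obtain ⟨h, hh⟩ := hg u hu
      obtain ⟨w, hw⟩ := Ideal.mem_span_singleton.mp hh
      have hwJ : w ∈ I.colon (Ideal.span {(p:B)}) := by
        rw [Ideal.mem_colon_span_singleton]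
        have : w * (p:B) = u - h * g := by rw [mul_comm]; exact hw.symm
        rw [this]
        exact Ideal.sub_mem _ hu (Ideal.mul_mem_left _ _ hgI)
      have := hTge hwJ
      rw [Submodule.mem_sup] at this
      obtain ⟨y, hy, z, hz, hyz⟩ := this
      obtain ⟨c, hc⟩ := Ideal.mem_span_singleton.mp hz
      rw [Submodule.mem_sup]
      refine ⟨h * g + (p:B) * y, ?_, (p:B)^(n+1) * c, ?_, ?_⟩
      · apply Ideal.add_mem
        · exact Ideal.mul_mem_left _ _ (Ideal.subset_span (by simp))
        · -- p * y ∈ span (insert g (image))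
          refine Submodule.span_induction ?_ ?_ ?_ ?_ hy
          · intro t ht
            refine Ideal.subset_span ?_
            simp only [Finset.coe_insert, Set.mem_insert_iff, Finset.coe_image, Set.mem_image,
              Finset.mem_coe]
            exact Or.inr ⟨t, ht, rfl⟩
          · simp
          · intro x y _ _ hx hy
            rw [mul_add]; exact Ideal.add_mem _ hx hy
          · intro b x _ hx
            have : (p:B) * (b • x) = b • ((p:B) * x) := by
              simp [smul_eq_mul]; ring
            rw [this]; exact Submodule.smul_mem _ _ hx
      · exact Ideal.mul_mem_right _ _ (Ideal.subset_span rfl)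
      · linear_combination -hw + (↑p : B) * hyz - (↑p:B) * hc


theorem modp (p a : ℕ) (hp : p.Prime) (ha : 0 < a) (f : (ZMod (p^a))[X])
    (K : Ideal ((ZMod (p^a))[X] ⧸ Ideal.span {f})) :
    ∃ g ∈ K, ∀ u ∈ K, ∃ h, u - h * g ∈
      Ideal.span {((p:ℕ) : (ZMod (p^a))[X] ⧸ Ideal.span {f})} := by
  haveI : Fact p.Prime := ⟨hp⟩
  haveI : NeZero (p^a) := ⟨pow_ne_zero a hp.pos.ne'⟩
  set mk := Ideal.Quotient.mk (Ideal.span {f})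
  set φ : ZMod (p^a) →+* ZMod p := ZMod.castHom (dvd_pow_self p ha.ne') (ZMod p)
  have hφsurj : Function.Surjective φ := by
    intro x
    refine ⟨((x.val : ℕ) : ZMod (p^a)), ?_⟩
    rw [map_natCast, ZMod.natCast_zmod_val]
  set ψ : (ZMod (p^a))[X] →+* (ZMod p)[X] := Polynomial.mapRingHom φ
  have hψsurj : Function.Surjective ψ := Polynomial.map_surjective φ hφsurj
  -- kernel of φ
  have hker : ∀ c : ZMod (p^a), φ c = 0 → ((p:ℕ) : ZMod (p^a)) ∣ c := by
    intro c hc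
    obtain ⟨m, rfl⟩ := (ZMod.natCast_rightInverse (n := p^a)).surjective c
    rw [map_natCast] at hc
    obtain ⟨m', rfl⟩ := (ZMod.natCast_eq_zero_iff m p).mp hc
    exact ⟨(m' : ZMod (p^a)), by push_cast; ring⟩
  set K' : Ideal (ZMod (p^a))[X] := K.comap mk
  set L : Ideal (ZMod p)[X] := K'.map ψ
  obtain ⟨d, hd⟩ := (IsPrincipalIdealRing.principal L).principal
  have hdL : d ∈ L := hd ▸ Ideal.subset_span rfl
  obtain ⟨g', hg'K', hg'd⟩ := (Ideal.mem_map_iff_of_surjective ψ hψsurj).mp hdL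
  refine ⟨mk g', hg'K', ?_⟩
  intro u hu
  obtain ⟨u', rfl⟩ := Ideal.Quotient.mk_surjective u
  have hu'K' : u' ∈ K' := hu
  have : ψ u' ∈ L := Ideal.mem_map_of_mem ψ hu'K'
  rw [hd, Ideal.submodule_span_eq, Ideal.mem_span_singleton] at this
  obtain ⟨c, hc⟩ := this
  obtain ⟨h', hh'⟩ := hψsurj c
  refine ⟨mk h', ?_⟩
  have hdvd : ((p:ℕ) : (ZMod (p^a))[X]) ∣ (u' - h' * g') := by
    have h0 : ψ (u' - h' * g') = 0 := by
      rw [map_sub, map_mul, hh', hg'd, hc]; ring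
    have : (C ((p:ℕ) : ZMod (p^a))) ∣ (u' - h' * g') := by
      rw [Polynomial.C_dvd_iff_dvd_coeff]
      intro i
      apply hker
      have h1 : φ ((u' - h' * g').coeff i) = (ψ (u' - h' * g')).coeff i :=
        (Polynomial.coeff_map φ i).symm
      rw [h0] at h1
      simpa using h1
    simpa [map_natCast (C : ZMod (p^a) →+* (ZMod (p^a))[X]) p] using this
  obtain ⟨w, hw⟩ := hdvd
  rw [Ideal.mem_span_singleton]
  refine ⟨mk w, ?_⟩
  calc mk u' - mk h' * mk g' = mk (u' - h' * g') := by rw [map_sub, map_mul]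
    _ = mk (((p:ℕ) : (ZMod (p^a))[X]) * w) := by rw [hw]
    _ = _ := by rw [map_mul, map_natCast]


theorem stmt12 (p a s : ℕ) (hp : p.Prime) (hodd : p ≠ 2) (ha : 1 < a) (hs : 1 ≤ s) :
    ∀ I : Ideal ((ZMod (p ^ a))[X] ⧸
        Ideal.span {(X : (ZMod (p ^ a))[X]) ^ p ^ s + 1}),
      ∃ S : Finset ((ZMod (p ^ a))[X] ⧸
          Ideal.span {(X : (ZMod (p ^ a))[X]) ^ p ^ s + 1}),
        S.card ≤ a ∧ I = Ideal.span (S : Set _) := by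
  intro I
  let f : (ZMod (p ^ a))[X] := (X : (ZMod (p ^ a))[X]) ^ p ^ s + 1
  obtain ⟨S, hcard, hle, hge⟩ :=
    key (B := (ZMod (p ^ a))[X] ⧸ Ideal.span {f}) p (modp p a hp (by omega) f) a I
  refine ⟨S, hcard, ?_⟩
  have h0 : ((p : (ZMod (p ^ a))[X] ⧸ Ideal.span {f}))^a = 0 := by
    have h1 : ((p : (ZMod (p ^ a))[X] ⧸ Ideal.span {f}))^a = ((p^a : ℕ) : _) := by
      push_cast; ring
    have h2 := map_natCast (algebraMap (ZMod (p^a)) ((ZMod (p ^ a))[X] ⧸ Ideal.span {f})) (p^a)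
    rw [ZMod.natCast_self, map_zero] at h2
    rw [h1, ← h2]
  rw [h0] at hge
  refine le_antisymm ?_ hle
  intro x hx
  have := hge hx
  rwa [Ideal.span_singleton_eq_bot.mpr rfl, sup_bot_eq] at this
end

section
/- Let $a > 1$, $s \geq 1$, and $R = \mathbb{Z}_{2^a}[x]/\langle x^{2^s}-1 \rangle$. Then $R$ is a local ring with maximal ideal $\langle 2, x+1 \rangle$, and $R$ is not a chain ring. -/
open Polynomial

lemma aux_two_dvd (a : ℕ) (ha : a ≠ 0) (x : ZMod (2^a))
    (h : (ZMod.castHom (dvd_pow_self 2 ha) (ZMod 2)) x = 0) : (2 : ZMod (2^a)) ∣ x := by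
  haveI : NeZero (2^a) := ⟨pow_ne_zero a two_ne_zero⟩
  rw [ZMod.castHom_apply] at h
  have h2 : ((x.val : ℕ) : ZMod 2) = 0 := by rw [ZMod.natCast_val]; exact h
  rw [ZMod.natCast_eq_zero_iff] at h2
  obtain ⟨k, hk⟩ := h2
  exact ⟨(k : ZMod (2^a)), by rw [← ZMod.natCast_zmod_val x, hk]; push_cast; ring⟩

theorem stmt16 (a s : ℕ) (ha : 1 < a) (hs : 1 ≤ s) :
    (∃ h : IsLocalRing ((ZMod (2 ^ a))[X] ⧸
        Ideal.span {(X : (ZMod (2 ^ a))[X]) ^ 2 ^ s - 1}),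
      @IsLocalRing.maximalIdeal _ _ h =
        Ideal.span {((2 : (ZMod (2 ^ a))[X] ⧸
            Ideal.span {(X : (ZMod (2 ^ a))[X]) ^ 2 ^ s - 1})),
          Ideal.Quotient.mk (Ideal.span {(X : (ZMod (2 ^ a))[X]) ^ 2 ^ s - 1}) (X + 1)}) ∧
      ∃ I J : Ideal ((ZMod (2 ^ a))[X] ⧸
          Ideal.span {(X : (ZMod (2 ^ a))[X]) ^ 2 ^ s - 1}),
        ¬ I ≤ J ∧ ¬ J ≤ I := by
  have ha0 : a ≠ 0 := by omega
  have hs0 : s ≠ 0 := by omega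
  set p : (ZMod (2^a))[X] := X ^ 2 ^ s - 1 with hp
  set Iq : Ideal (ZMod (2^a))[X] := Ideal.span {p} with hIq
  set mk := Ideal.Quotient.mk Iq with hmk
  -- even power of -1
  have heven : Even (2^s) := by
    rcases s with _|s; · omega
    exact ⟨2^s, by rw [pow_succ]; ring⟩
  have hneg1 : ((-1 : ZMod (2^a)))^(2^s) = 1 := heven.neg_one_pow
  have hevalp : p.eval (-1) = 0 := by
    simp only [hp, eval_sub, eval_pow, eval_X, eval_one, hneg1, sub_self]
  -- phi
  set φ : (ZMod (2^a))[X] →+* ZMod 2 := (ZMod.castHom (dvd_pow_self 2 ha0) (ZMod 2)).comp (evalRingHom (-1)) with hφ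
  have hφp : ∀ x ∈ Iq, φ x = 0 := by
    intro x hx
    rw [hIq, Ideal.mem_span_singleton] at hx
    obtain ⟨g, rfl⟩ := hx
    simp only [hφ, RingHom.comp_apply, map_mul, coe_evalRingHom, hevalp, zero_mul, map_zero]
  set ψ := Ideal.Quotient.lift Iq φ hφp with hψ
  have hψmk : ∀ f : (ZMod (2^a))[X], ψ (mk f) = φ f := fun f => Ideal.Quotient.lift_mk Iq φ hφp
  have hsurj : Function.Surjective ψ := by
    intro y
    haveI : NeZero (2:ℕ) := ⟨two_ne_zero⟩
    refine ⟨mk (C ((y.val : ZMod (2^a)))), ?_⟩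
    rw [hψmk]
    simp only [hφ, RingHom.comp_apply, coe_evalRingHom, eval_C, map_natCast,
      ZMod.natCast_zmod_val]
  -- 2 in R
  have h2R : (2 : (ZMod (2^a))[X] ⧸ Iq) = mk 2 := by rw [hmk]; rfl
  have hx2 : (2 : (ZMod (2^a))[X]) = C 2 := (map_ofNat C 2).symm
  set m : Ideal ((ZMod (2^a))[X] ⧸ Iq) := Ideal.span {(2 : (ZMod (2^a))[X] ⧸ Iq), mk (X+1)} with hm
  have hXadd : (X - C (-1 : ZMod (2^a))) = X + 1 := by
    rw [map_neg, map_one, sub_neg_eq_add]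
  have hker : RingHom.ker ψ = m := by
    apply le_antisymm
    · intro r hr
      obtain ⟨f, rfl⟩ := Ideal.Quotient.mk_surjective r
      rw [RingHom.mem_ker, hψmk] at hr
      have hr' : (ZMod.castHom (dvd_pow_self 2 ha0) (ZMod 2)) (f.eval (-1)) = 0 := hr
      obtain ⟨c, hc⟩ := aux_two_dvd a ha0 _ hr'
      have hroot : (X - C (-1 : ZMod (2^a))) ∣ (f - C (f.eval (-1))) := by
        rw [dvd_iff_isRoot]
        simp [IsRoot]
      obtain ⟨q, hq⟩ := hroot
      have hfeq : f = (X + 1) * q + C 2 * C c := by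
        rw [← map_mul, ← hc, ← hXadd, ← hq]; ring
      rw [hm, Ideal.mem_span_pair]
      refine ⟨mk (C c), mk q, ?_⟩
      have hstep : mk f = mk ((X+1)*q) + mk (C 2 * C c) := by rw [← map_add, ← hfeq]
      rw [hstep, map_mul, map_mul, ← hx2, ← h2R]
      ring
    · rw [hm, Ideal.span_le, Set.insert_subset_iff, Set.singleton_subset_iff]
      constructor
      · show (2 : (ZMod (2^a))[X] ⧸ Iq) ∈ RingHom.ker ψ
        rw [RingHom.mem_ker, h2R, hψmk]
        have : φ 2 = 2 := map_ofNat φ 2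
        rw [this]
        decide
      · show mk (X + 1) ∈ RingHom.ker ψ
        rw [RingHom.mem_ker, hψmk, hφ]
        simp
  have hmmax : m.IsMaximal := hker ▸ RingHom.ker_isMaximal_of_surjective ψ hsurj
  -- nilpotency of 2
  have h2A : (2 : (ZMod (2^a))[X])^a = 0 := by
    rw [hx2, ← map_pow]
    have h0 : (2 : ZMod (2^a))^a = 0 := by
      have h1 := ZMod.natCast_self (2^a)
      rwa [Nat.cast_pow, Nat.cast_ofNat] at h1
    rw [h0, map_zero]
  have h2nil : (2 : (ZMod (2^a))[X] ⧸ Iq)^a = 0 := by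
    rw [h2R, ← map_pow, h2A, map_zero]
  -- nilpotency of mk (X+1)
  have hmap0 : (((X+1)^(2^s) - (X^(2^s) + 1) : (ZMod (2^a))[X])).map
      (ZMod.castHom (dvd_pow_self 2 ha0) (ZMod 2)) = 0 := by
    have hchar : ((X : (ZMod 2)[X]) + 1)^(2^s) = X^(2^s) + 1 := by
      have := add_pow_char_pow (R := (ZMod 2)[X]) (p := 2) (n := s) (x := X) (y := 1)
      rwa [one_pow] at this
    simp [Polynomial.map_sub, Polynomial.map_add, Polynomial.map_pow, hchar]
  have hDdvd : (2 : (ZMod (2^a))[X]) ∣ ((X+1)^(2^s) - (X^(2^s) + 1)) := by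
    rw [hx2, C_dvd_iff_dvd_coeff]
    intro i
    refine aux_two_dvd a ha0 _ ?_
    rw [← Polynomial.coeff_map, hmap0, Polynomial.coeff_zero]
  obtain ⟨E, hE⟩ := hDdvd
  have hkey : (mk (X+1))^(2^s) = 2 * (1 + mk E) := by
    rw [← map_pow]
    have hdec : ((X+1) : (ZMod (2^a))[X])^(2^s) = p + 2 + 2*E := by
      rw [hp, ← hE]; ring
    have hp0 : mk p = 0 := Ideal.Quotient.eq_zero_iff_mem.mpr
      (hIq ▸ Ideal.subset_span (Set.mem_singleton p))
    rw [hdec, map_add, map_add, map_mul, hp0, ← h2R]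
    ring
  have hxnil : (mk (X+1))^(2^s * a) = 0 := by
    rw [pow_mul, hkey, mul_pow, h2nil, zero_mul]
  -- uniqueness of the maximal ideal
  have huniq : ∀ M : Ideal ((ZMod (2^a))[X] ⧸ Iq), M.IsMaximal → M = m := by
    intro M hM
    have hpr := hM.isPrime
    have h2M : (2 : (ZMod (2^a))[X] ⧸ Iq) ∈ M :=
      hpr.mem_of_pow_mem a (by rw [h2nil]; exact M.zero_mem)
    have hxM : mk (X+1) ∈ M :=
      hpr.mem_of_pow_mem (2^s * a) (by rw [hxnil]; exact M.zero_mem)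
    have hle : m ≤ M := by
      rw [hm, Ideal.span_le, Set.insert_subset_iff, Set.singleton_subset_iff]
      exact ⟨h2M, hxM⟩
    exact (hmmax.eq_of_le hM.ne_top hle).symm
  have hloc : IsLocalRing ((ZMod (2^a))[X] ⧸ Iq) :=
    IsLocalRing.of_unique_max_ideal ⟨m, hmmax, fun M hM => huniq M hM⟩
  have hmax_eq : @IsLocalRing.maximalIdeal _ _ hloc = m :=
    (@IsLocalRing.eq_maximalIdeal _ _ hloc _ hmmax).symm
  -- 2 ≠ 0 in ZMod (2^a)
  have h20 : (2 : ZMod (2^a)) ≠ 0 := by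
    intro h0
    have h1 : ((2:ℕ) : ZMod (2^a)) = 0 := by exact_mod_cast h0
    rw [ZMod.natCast_eq_zero_iff] at h1
    have h2 := Nat.le_of_dvd (by norm_num) h1
    have h3 : 2^2 ≤ 2^a := Nat.pow_le_pow_right (by norm_num) ha
    omega
  -- not (2) ≤ (x+1)
  have hIJ : ¬ Ideal.span {(2 : (ZMod (2^a))[X] ⧸ Iq)} ≤ Ideal.span {mk (X+1)} := by
    intro hle
    have h2mem : (2 : (ZMod (2^a))[X] ⧸ Iq) ∈ Ideal.span {mk (X+1)} :=
      hle (Ideal.subset_span rfl)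
    rw [Ideal.mem_span_singleton] at h2mem
    obtain ⟨t, ht⟩ := h2mem
    obtain ⟨g, rfl⟩ := Ideal.Quotient.mk_surjective t
    rw [h2R, ← map_mul] at ht
    have hsub : (2 : (ZMod (2^a))[X]) - (X+1)*g ∈ Iq := Ideal.Quotient.eq.mp ht
    rw [hIq, Ideal.mem_span_singleton] at hsub
    obtain ⟨h, hh⟩ := hsub
    have heval := congrArg (Polynomial.eval (-1 : ZMod (2^a))) hh
    simp only [eval_sub, eval_mul, eval_add, eval_X, eval_one, eval_ofNat,
      neg_add_cancel, zero_mul, sub_zero, hp, eval_pow, hneg1, sub_self] at heval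
    exact h20 heval
  -- not (x+1) ≤ (2)
  have hJI : ¬ Ideal.span {mk (X+1)} ≤ Ideal.span {(2 : (ZMod (2^a))[X] ⧸ Iq)} := by
    intro hle
    have hxmem : mk (X+1) ∈ Ideal.span {(2 : (ZMod (2^a))[X] ⧸ Iq)} :=
      hle (Ideal.subset_span rfl)
    rw [Ideal.mem_span_singleton] at hxmem
    obtain ⟨t, ht⟩ := hxmem
    obtain ⟨g, rfl⟩ := Ideal.Quotient.mk_surjective t
    rw [h2R, ← map_mul] at ht
    have hsub : ((X+1) : (ZMod (2^a))[X]) - 2*g ∈ Iq := Ideal.Quotient.eq.mp ht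
    rw [hIq, Ideal.mem_span_singleton] at hsub
    obtain ⟨h, hh⟩ := hsub
    have hcast := congrArg (Polynomial.map (ZMod.castHom (dvd_pow_self 2 ha0) (ZMod 2))) hh
    have h2z : ((2:ZMod 2)) = 0 := by decide
    simp only [Polynomial.map_sub, Polynomial.map_mul, Polynomial.map_add,
      Polynomial.map_pow, Polynomial.map_one, Polynomial.map_X, Polynomial.map_ofNat,
      hp] at hcast
    rw [show ((2 : (ZMod 2)[X])) = 0 by rw [← map_ofNat (C : ZMod 2 →+* (ZMod 2)[X]) 2, h2z, map_zero],
      zero_mul, sub_zero] at hcast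
    -- hcast : X + 1 = (X^(2^s) - 1) * map h
    have hXadd1 : ((X:(ZMod 2)[X]) + 1) = X + C 1 := by rw [map_one]
    have hne1 : ((X:(ZMod 2)[X]) + 1) ≠ 0 := by rw [hXadd1]; exact X_add_C_ne_zero 1
    have hdegp : ((X:(ZMod 2)[X])^(2^s) - 1).natDegree = 2^s := by
      rw [show ((1:(ZMod 2)[X])) = C 1 from (map_one C).symm]
      exact natDegree_X_pow_sub_C
    have hpne : ((X:(ZMod 2)[X])^(2^s) - 1) ≠ 0 := by
      intro h0
      rw [h0, natDegree_zero] at hdegp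
      have hpos : (0:ℕ) < 2^s := pow_pos (by norm_num) s
      omega
    have hhne : (h.map (ZMod.castHom (dvd_pow_self 2 ha0) (ZMod 2))) ≠ 0 := by
      intro h0
      rw [h0, mul_zero] at hcast
      exact hne1 hcast
    have hdeg := congrArg Polynomial.natDegree hcast
    rw [hXadd1, natDegree_X_add_C, natDegree_mul hpne hhne, hdegp] at hdeg
    have h2s : 2 ≤ 2^s := by
      calc 2 = 2^1 := rfl
      _ ≤ 2^s := Nat.pow_le_pow_right (by norm_num) hs
    omega
  exact ⟨⟨hloc, hmax_eq⟩, Ideal.span {(2 : (ZMod (2^a))[X] ⧸ Iq)},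
    Ideal.span {mk (X+1)}, hIJ, hJI⟩
end

section
/- Let $a > 1$, $s \geq 1$, and $R = \mathbb{Z}_{2^a}[x]/\langle x^{2^s}-1 \rangle$. Then the nilpotency index of $x+1$ in $R$ is exactly $(a+1)2^{s-1}$; that is, $(x+1)^{(a+1)2^{s-1}} = 0$ and $(x+1)^{(a+1)2^{s-1}-1} \neq 0$. -/
open Polynomial

lemma aux1_s17 {A : Type*} [CommRing A] (c : A) : ∀ m : ℕ, ∃ α β : A, (c-1)^(m+1) = (c-1) + 2*α + (c^2-c)*β := by
  intro m
  induction m with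
  | zero => exact ⟨0, 0, by ring⟩
  | succ k ih =>
    obtain ⟨α, β, h⟩ := ih
    refine ⟨α*c - α - (c-1), β*(c-1) + 1, ?_⟩
    have h2 : (c-1)^(k+1+1) = ((c-1) + 2*α + (c^2-c)*β)*(c-1) := by rw [← h]; ring
    rw [h2]; ring

lemma aux2 {A : Type*} [CommRing A] (c : A) : ∀ m : ℕ, ∃ α β : A, c^(m+1) - (c-1)^(m+1) - 1 = 2*α + (c^2-c)*β := by
  intro m
  induction m with
  | zero => exact ⟨0, 0, by ring⟩
  | succ k ih =>
    obtain ⟨α, β, h⟩ := ih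
    obtain ⟨α₁, β₁, h₁⟩ := aux1_s17 c k
    exact ⟨c*α + α₁ + (c-1), c*β + β₁, by linear_combination c * h + h₁⟩

lemma aux3 {A : Type*} [CommRing A] (y c : A) (h : y^2 = -(2*y)) :
    ∀ k : ℕ, (y+2*c)^(k+1) = 2^k*(c^(k+1)-(c-1)^(k+1))*y + 2^(k+1)*c^(k+1) := by
  intro k
  induction k with
  | zero => ring
  | succ k ih =>
    have h2 : (y+2*c)^(k+1+1) = (2^k*(c^(k+1)-(c-1)^(k+1))*y + 2^(k+1)*c^(k+1))*(y+2*c) := by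
      rw [← ih]; ring
    rw [h2]
    linear_combination (2^k*(c^(k+1)-(c-1)^(k+1))) * h

set_option maxHeartbeats 2000000 in
theorem stmt17 (a s : ℕ) (ha : 1 < a) (hs : 1 ≤ s) :
    (Ideal.Quotient.mk (Ideal.span {(X : (ZMod (2 ^ a))[X]) ^ 2 ^ s - 1})
        (X + 1)) ^ ((a + 1) * 2 ^ (s - 1)) = 0 ∧
      (Ideal.Quotient.mk (Ideal.span {(X : (ZMod (2 ^ a))[X]) ^ 2 ^ s - 1})
        (X + 1)) ^ ((a + 1) * 2 ^ (s - 1) - 1) ≠ 0 := by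
  have ha0 : a ≠ 0 := by omega
  have h2a : (2:ℕ) ∣ 2^a := dvd_pow_self 2 ha0
  set I : Ideal (ZMod (2^a))[X] := Ideal.span {(X : (ZMod (2^a))[X]) ^ 2 ^ s - 1} with hI
  set mk : (ZMod (2^a))[X] →+* _ := Ideal.Quotient.mk I with hmk
  set ψ : (ZMod (2^a))[X] →+* (ZMod 2)[X] := Polynomial.mapRingHom (ZMod.castHom h2a (ZMod 2)) with hψ
  -- castHom kills exactly multiples of 2
  have hdvd2 : ∀ c : ZMod (2^a), ZMod.castHom h2a (ZMod 2) c = 0 → (2 : ZMod (2^a)) ∣ c := by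
    intro c h
    have h1 : ((c.val : ℕ) : ZMod 2) = 0 := by rwa [ZMod.castHom_apply, ← ZMod.natCast_val] at h
    obtain ⟨k, hk⟩ := (ZMod.natCast_eq_zero_iff _ _).mp h1
    have hc : ((c.val : ℕ) : ZMod (2^a)) = c := by rw [ZMod.natCast_val, ZMod.cast_id]
    exact ⟨(k : ZMod (2^a)), by rw [← hc, hk]; push_cast; ring⟩
  have hmod2 : ∀ p q : (ZMod (2^a))[X], ψ p = ψ q → ∃ r, p = q + 2*r := by
    intro p q h
    have h2 : (C (2 : ZMod (2^a))) ∣ (p - q) := by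
      rw [Polynomial.C_dvd_iff_dvd_coeff]
      intro i
      rw [Polynomial.coeff_sub]
      apply hdvd2
      rw [map_sub]
      have h0 : ψ (p - q) = 0 := by rw [map_sub, h, sub_self]
      have h1 : (ψ (p-q)).coeff i = 0 := by rw [h0]; simp
      simpa [hψ, Polynomial.coe_mapRingHom, Polynomial.coeff_map] using h1
    obtain ⟨r, hr⟩ := h2
    refine ⟨r, ?_⟩
    have hC2 : (C (2 : ZMod (2^a))) = 2 := map_ofNat C 2
    rw [← hC2]
    linear_combination hr
  have hψsurj : Function.Surjective ψ := by
    apply Polynomial.map_surjective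
    intro c
    exact ⟨(c.val : ZMod (2^a)), by rw [map_natCast, ZMod.natCast_val, ZMod.cast_id]⟩
  have hfrob : ∀ m : ℕ, ψ ((X+1)^(2^m)) = X^(2^m) + 1 := by
    intro m
    have : ψ ((X+1)^(2^m)) = ((X:(ZMod 2)[X])+1)^(2^m) := by
      simp [hψ]
    rw [this, add_pow_char_pow, one_pow]
  -- notation
  have hn1 : 1 ≤ 2^(s-1) := Nat.one_le_two_pow
  set n := 2^(s-1) with hn
  have h2n : 2^s = 2*n := by rw [hn, ← pow_succ']; congr 1; omega
  set x := mk X with hx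
  set z := mk (X+1) with hz
  have hzx : z = x + 1 := by rw [hz, map_add, map_one]
  have hf0 : mk ((X : (ZMod (2^a))[X])^(2^s) - 1) = 0 :=
    Ideal.Quotient.eq_zero_iff_mem.mpr (Ideal.subset_span rfl)
  have hxs : x^(2^s) = 1 := by
    have h' := hf0
    rw [map_sub, map_one, map_pow] at h'
    have := sub_eq_zero.mp h'
    rw [← hx] at this
    exact this
  set y := x^n - 1 with hy0
  have hψeq : ψ ((X+1)^n) = ψ (X^n - 1) := by
    rw [hn, hfrob (s-1)]
    have h2 : ψ (X^(2^(s-1)) - 1) = X^(2^(s-1)) - 1 := by simp [hψ]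
    rw [h2, CharTwo.sub_eq_add]
  obtain ⟨g, hg⟩ := hmod2 _ _ hψeq
  set c := mk g with hc
  have hzn : z^n = y + 2*c := by
    rw [hz, ← map_pow, hg]
    simp only [map_add, map_mul, map_sub, map_one, map_pow, map_ofNat]
    rfl
  have hy : y^2 = -(2*y) := by
    have h1 : y^2 + 2*y = x^(2^s) - 1 := by rw [h2n, hy0]; ring
    rw [hxs] at h1
    linear_combination h1
  have hz2s : ∃ rr, z^(2^s) = 2*rr := by
    have hψeq2 : ψ ((X+1)^(2^s)) = ψ (X^(2^s) + 1) := by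
      rw [hfrob s]; simp [hψ]
    obtain ⟨r₀, hr₀⟩ := hmod2 _ _ hψeq2
    refine ⟨1 + mk r₀, ?_⟩
    rw [hz, ← map_pow, hr₀]
    simp only [map_add, map_mul, map_pow, map_one, map_ofNat]
    rw [← hx, hxs]
    ring
  have hcc : ∃ δ rr, c^2 - c = z*δ + 2*rr := by
    have hroot : ((ψ g)^2 - (ψ g)).IsRoot 1 := by
      have he : ∀ e : ZMod 2, e^2 - e = 0 := by decide
      simp only [Polynomial.IsRoot, Polynomial.eval_sub, Polynomial.eval_pow]
      exact he _
    obtain ⟨qq, hqq⟩ := Polynomial.dvd_iff_isRoot.mpr hroot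
    obtain ⟨Qp, hQp⟩ := hψsurj qq
    have heq : ψ (g^2 - g) = ψ ((X - 1)*Qp) := by
      rw [map_sub, map_pow, map_mul, map_sub, map_one, hQp]
      have hXX : ψ X = X := by simp [hψ]
      rw [hXX]
      rw [hqq, Polynomial.C_1]
    obtain ⟨r₁, hr₁⟩ := hmod2 _ _ heq
    refine ⟨mk Qp, mk r₁ - mk Qp + mk Qp * x - mk Qp * x, ?_⟩
    have := congrArg mk hr₁
    simp only [map_add, map_mul, map_sub, map_one, map_pow, map_ofNat] at this
    rw [← hx, ← hc] at this
    rw [hzx] at *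
    linear_combination this
  -- 2^a = 0 in the quotient
  have hR2 : (2 : ZMod (2^a))^a = 0 := by
    have h0 : ((2^a : ℕ) : ZMod (2^a)) = 0 := ZMod.natCast_self _
    exact_mod_cast h0
  have hP2 : (2 : (ZMod (2^a))[X])^a = 0 := by
    rw [show (2 : (ZMod (2^a))[X]) = C 2 from (map_ofNat C 2).symm, ← map_pow, hR2, map_zero]
  have h2Q : (2 : (ZMod (2^a))[X] ⧸ I)^a = 0 := by
    rw [show (2 : (ZMod (2^a))[X] ⧸ I) = mk 2 from (map_ofNat mk 2).symm, ← map_pow, hP2, map_zero]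
  constructor
  · rw [mul_comm, pow_mul, hzn]
    have h5 := aux3 y c hy a
    rw [h5, pow_succ (2 : (ZMod (2^a))[X] ⧸ I) a, h2Q]
    ring
  · intro hcontra
    have hsplit : (a+1)*n - 1 = a*n + (n-1) := by
      have : (a+1)*n = a*n + n := by ring
      omega
    have hzan : z^(a*n) = 2^(a-1) * ((c^a - (c-1)^a) * y) := by
      rw [mul_comm, pow_mul, hzn]
      have h3 := aux3 y c hy (a-1)
      rw [show a-1+1 = a from by omega] at h3
      rw [h3, h2Q]
      ring
    have hkey : ∀ t r : (ZMod (2^a))[X] ⧸ I, 2^(a-1)*(t + 2*r) = 2^(a-1)*t := by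
      intro t r
      have h4 : (2 : (ZMod (2^a))[X] ⧸ I)^(a-1)*2 = 0 := by
        rw [← pow_succ, show a-1+1=a from by omega]; exact h2Q
      linear_combination r * h4
    obtain ⟨δ, rr, hccE⟩ := hcc
    obtain ⟨r2, hz2E⟩ := hz2s
    obtain ⟨α, β, hAB⟩ := aux2 c (a-1)
    rw [show a-1+1 = a from by omega] at hAB
    have hyz : y = z^n - 2*c := by linear_combination hzn.symm
    have hpows1 : z^n * z^(n-1) = z^(2^s - 1) := by rw [← pow_add]; congr 1; omega
    have hpows2 : z * z^(2^s - 1) = z^(2^s) := by rw [← pow_succ']; congr 1; omega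
    have hmain : (c^a - (c-1)^a) * y * z^(n-1)
        = z^(2^s-1) + 2*( α*z^(2^s-1) + β*(rr*z^(2^s-1) + δ*r2) - (c^a-(c-1)^a)*c*z^(n-1) ) := by
      linear_combination (c^a-(c-1)^a)*z^(n-1)*hyz + (c^a-(c-1)^a)*hpows1
        + z^(2^s-1)*hAB + β*z^(2^s-1)*hccE + β*δ*hpows2 + β*δ*hz2E
    have hfinal : z^((a+1)*n - 1) = 2^(a-1) * z^(2^s-1) := by
      rw [hsplit, pow_add, hzan]
      rw [show (2 : (ZMod (2^a))[X] ⧸ I)^(a-1)*((c^a-(c-1)^a)*y)*z^(n-1)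
            = 2^(a-1)*((c^a-(c-1)^a)*y*z^(n-1)) from by ring, hmain, hkey]
    rw [hfinal] at hcontra
    -- translate back to polynomials
    have hmkP : mk ((2 : (ZMod (2^a))[X])^(a-1) * (X+1)^(2^s-1)) = 0 := by
      rw [map_mul, map_pow, map_pow, map_ofNat, ← hz]
      exact hcontra
    have hmem := Ideal.Quotient.eq_zero_iff_mem.mp hmkP
    rw [hI, Ideal.mem_span_singleton] at hmem
    obtain ⟨k, hk⟩ := hmem
    haveI : Fact (1 < 2^a) := ⟨Nat.one_lt_two_pow ha0⟩
    have ht : ((2:ZMod (2^a))^(a-1)) ≠ 0 := by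
      intro h0
      have h1 : ((2^(a-1) : ℕ) : ZMod (2^a)) = 0 := by push_cast; exact h0
      have h2 := (ZMod.natCast_eq_zero_iff _ _).mp h1
      have h3 := Nat.le_of_dvd (by positivity) h2
      have h4 : 2^(a-1) < 2^a := Nat.pow_lt_pow_right one_lt_two (by omega)
      omega
    have hmonic : (((X:(ZMod (2^a))[X])+1)^(2^s-1)).Monic := by
      have : ((X:(ZMod (2^a))[X])+1).Monic := by
        simpa using monic_X_add_C (1 : ZMod (2^a))
      exact this.pow _
    have hPC : (2 : (ZMod (2^a))[X])^(a-1) = C ((2:ZMod (2^a))^(a-1)) := by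
      rw [map_pow, map_ofNat]
    have hPne : (2 : (ZMod (2^a))[X])^(a-1) * (X+1)^(2^s-1) ≠ 0 := by
      rw [hPC]
      refine hmonic.mul_left_ne_zero ?_
      simpa only [Ne, Polynomial.C_eq_zero] using ht
    have hkne : k ≠ 0 := by
      intro h0; rw [h0, mul_zero] at hk; exact hPne hk
    have hfmonic : ((X:(ZMod (2^a))[X])^(2^s) - 1).Monic := by
      simpa using monic_X_pow_sub_C (1 : ZMod (2^a)) (by positivity : 2^s ≠ 0)
    have hdeg1 : ((X:(ZMod (2^a))[X])^(2^s) - 1).natDegree = 2^s := by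
      simpa using natDegree_X_pow_sub_C (n := 2^s) (r := (1 : ZMod (2^a)))
    have hdegmul : (((X:(ZMod (2^a))[X])^(2^s) - 1) * k).natDegree = 2^s + k.natDegree := by
      rw [hfmonic.natDegree_mul' hkne, hdeg1]
    have hdegP : ((2 : (ZMod (2^a))[X])^(a-1) * (X+1)^(2^s-1)).natDegree ≤ 2^s - 1 := by
      rw [hPC]
      refine le_trans (natDegree_C_mul_le _ _) ?_
      refine le_trans (natDegree_pow_le) ?_
      have hX1 : ((X:(ZMod (2^a))[X])+1).natDegree = 1 := by
        simpa using natDegree_X_add_C (1:ZMod (2^a))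
      rw [hX1, mul_one]
    rw [hk, hdegmul] at hdegP
    have hs2 : 2 ≤ 2^s := by
      calc 2 = 2^1 := by norm_num
      _ ≤ 2^s := Nat.pow_le_pow_right (by norm_num) hs
    omega
end

section
/- Let $a > 1$, $s \geq 1$, and $R = \mathbb{Z}_{2^a}[x]/\langle x^{2^s}-1 \rangle$. For every $t \geq 0$ there exist a unit $b_t(x) \in R$ and $a_t(x) \in R$ lying in the ideal $\langle 2^{t+2}(x+1) \rangle$ such that $(x+1)^{2^s + t 2^{s-1}} = 2^{t+1} b_t(x)(x+1)^{2^{s-1}} + a_t(x)$. -/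
open Polynomial

private lemma stmt18_two_dvd (a : ℕ) (ha : 1 ≤ a) (p : (ZMod (2^a))[X])
    (hp : p.map (ZMod.castHom (dvd_pow_self 2 (by omega : a ≠ 0)) (ZMod 2)) = 0) :
    (2 : (ZMod (2^a))[X]) ∣ p := by
  haveI : NeZero (2^a) := ⟨by positivity⟩
  have h2 : (2 : (ZMod (2^a))[X]) = C 2 := by
    rw [show ((2:ZMod (2^a))) = ((2:ℕ):ZMod (2^a)) by push_cast; ring, C_eq_natCast]
    push_cast; ring
  rw [h2, Polynomial.C_dvd_iff_dvd_coeff]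
  intro n
  have hc : (ZMod.castHom (dvd_pow_self 2 (by omega : a ≠ 0)) (ZMod 2)) (p.coeff n) = 0 := by
    rw [← Polynomial.coeff_map, hp, Polynomial.coeff_zero]
  set c := p.coeff n with hcdef
  have hval : ((c.val : ℕ) : ZMod 2) = 0 := by
    rw [← map_natCast (ZMod.castHom (dvd_pow_self 2 (by omega : a ≠ 0)) (ZMod 2)) c.val,
      ZMod.natCast_zmod_val]
    exact hc
  obtain ⟨d, hd⟩ := (ZMod.natCast_eq_zero_iff _ _).mp hval
  refine ⟨(d : ZMod (2^a)), ?_⟩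
  have : ((c.val : ℕ) : ZMod (2^a)) = c := ZMod.natCast_zmod_val c
  rw [← this, hd]
  push_cast
  ring

private lemma stmt18_split (a m : ℕ) (ha : 1 < a) :
    ∃ h k : (ZMod (2^a))[X],
      (X + 1 : (ZMod (2^a))[X]) ^ 2 ^ m = X ^ 2 ^ m + 1 + 2 * h ∧
      h * (X ^ 2 ^ m + h) = (X + 1) * k := by
  haveI : Fact (Nat.Prime 2) := ⟨Nat.prime_two⟩
  rcases Nat.eq_zero_or_pos m with hm | hm
  · subst hm
    refine ⟨0, 0, ?_, by ring⟩
    norm_num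
  · have hmap : ((X + 1 : (ZMod (2^a))[X]) ^ 2 ^ m - X ^ 2 ^ m - 1).map
        (ZMod.castHom (dvd_pow_self 2 (by omega : a ≠ 0)) (ZMod 2)) = 0 := by
      simp only [Polynomial.map_sub, Polynomial.map_pow, Polynomial.map_add,
        Polynomial.map_one, Polynomial.map_X]
      rw [add_pow_char_pow]
      ring
    obtain ⟨h₀, hp⟩ := stmt18_two_dvd a (by omega) _ hmap
    have hpow_ne : (2:ℕ) ^ m ≠ 0 := by positivity
    have heven : Even ((2:ℕ) ^ m) := by
      obtain ⟨m', rfl⟩ : ∃ m', m = m' + 1 := ⟨m - 1, by omega⟩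
      exact ⟨2 ^ m', by rw [pow_succ]; ring⟩
    have hpeval : ((X + 1 : (ZMod (2^a))[X]) ^ 2 ^ m - X ^ 2 ^ m - 1).eval (-1) = -2 := by
      simp only [eval_sub, eval_pow, eval_add, eval_X, eval_one]
      rw [show (-1 : ZMod (2^a)) + 1 = 0 by ring, zero_pow hpow_ne, heven.neg_one_pow]
      ring
    set e : ZMod (2^a) := h₀.eval (-1) with hedef
    have h2e : (-2 : ZMod (2^a)) = 2 * e := by
      rw [← hpeval, hp, eval_mul]
      norm_num
      rfl
    have he : 2 * (e + 1) = 0 := by linear_combination -h2e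
    have hC : (2 : (ZMod (2^a))[X]) * C (e + 1) = 0 := by
      rw [show (2:(ZMod (2^a))[X]) = C 2 by
        rw [show ((2:ZMod (2^a))) = ((2:ℕ):ZMod (2^a)) by push_cast; ring, C_eq_natCast]
        push_cast; ring, ← C_mul, he, C_0]
    have hh : (X + 1 : (ZMod (2^a))[X]) ^ 2 ^ m = X ^ 2 ^ m + 1 + 2 * (h₀ - C (e + 1)) := by
      have h2h : (2:(ZMod (2^a))[X]) * (h₀ - C (e+1))
          = (X + 1) ^ 2 ^ m - X ^ 2 ^ m - 1 := by
        rw [mul_sub, hC, ← hp]; ring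
      linear_combination -h2h
    have hroot : IsRoot ((h₀ - C (e+1)) * (X ^ 2 ^ m + (h₀ - C (e+1)))) (-1) := by
      simp only [IsRoot, eval_mul, eval_sub, eval_add, eval_pow, eval_X, eval_C,
        heven.neg_one_pow, ← hedef]
      ring
    have hdvd := dvd_iff_isRoot.mpr hroot
    rw [show (X - C (-1) : (ZMod (2^a))[X]) = X + 1 by rw [map_neg, map_one]; ring] at hdvd
    obtain ⟨k, hk⟩ := hdvd
    exact ⟨h₀ - C (e + 1), k, hh, hk⟩

theorem stmt18 (a s : ℕ) (ha : 1 < a) (hs : 1 ≤ s) (t : ℕ) :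
    ∃ b c : (ZMod (2 ^ a))[X] ⧸ Ideal.span {(X : (ZMod (2 ^ a))[X]) ^ 2 ^ s - 1},
      IsUnit b ∧
        c ∈ Ideal.span {(2 : (ZMod (2 ^ a))[X] ⧸
            Ideal.span {(X : (ZMod (2 ^ a))[X]) ^ 2 ^ s - 1}) ^ (t + 2) *
          Ideal.Quotient.mk (Ideal.span {(X : (ZMod (2 ^ a))[X]) ^ 2 ^ s - 1}) (X + 1)} ∧
        (Ideal.Quotient.mk (Ideal.span {(X : (ZMod (2 ^ a))[X]) ^ 2 ^ s - 1})
            (X + 1)) ^ (2 ^ s + t * 2 ^ (s - 1)) =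
          (2 : (ZMod (2 ^ a))[X] ⧸
            Ideal.span {(X : (ZMod (2 ^ a))[X]) ^ 2 ^ s - 1}) ^ (t + 1) * b *
            (Ideal.Quotient.mk (Ideal.span {(X : (ZMod (2 ^ a))[X]) ^ 2 ^ s - 1})
              (X + 1)) ^ (2 ^ (s - 1)) + c := by
  obtain ⟨m, rfl⟩ : ∃ m, s = m + 1 := ⟨s - 1, by omega⟩
  obtain ⟨h, k, hh, hk⟩ := stmt18_split a m ha
  set I : Ideal (ZMod (2^a))[X] := Ideal.span {(X : (ZMod (2 ^ a))[X]) ^ 2 ^ (m+1) - 1} with hI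
  set π := Ideal.Quotient.mk I with hπ
  set u := π (X + 1) with hu
  set K := π k with hK
  -- the relation X^(2^(m+1)) = 1 in the quotient
  have hz : π ((X : (ZMod (2 ^ a))[X]) ^ 2 ^ (m+1) - 1) = 0 :=
    Ideal.Quotient.eq_zero_iff_mem.mpr (Ideal.subset_span rfl)
  -- key identity in the polynomial ring
  have hS : (X + 1 : (ZMod (2^a))[X]) ^ 2 ^ (m+1)
      = ((X : (ZMod (2^a))[X]) ^ 2 ^ (m+1) - 1) + 2 * (X + 1) ^ 2 ^ m + 4 * ((X + 1) * k) := by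
    have e1 : (X + 1 : (ZMod (2^a))[X]) ^ 2 ^ (m+1) = ((X + 1) ^ 2 ^ m) ^ 2 := by
      rw [← pow_mul, pow_succ]
    have e2 : (X : (ZMod (2^a))[X]) ^ 2 ^ (m+1) = (X ^ 2 ^ m) ^ 2 := by
      rw [← pow_mul, pow_succ]
    rw [e1, e2, hh, ← hk]
    ring
  -- key identity in the quotient
  have key : u ^ 2 ^ m * u ^ 2 ^ m = 2 * u ^ 2 ^ m + 4 * (u * K) := by
    have h' := congrArg π hS
    simp only [map_add, map_mul, map_sub, map_pow, map_one, map_ofNat] at h'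
    have hz' : (π (X : (ZMod (2^a))[X])) ^ 2 ^ (m+1) - 1 = 0 := by
      have := hz
      simp only [map_sub, map_pow, map_one] at this
      exact this
    rw [← pow_add, show 2^m + 2^m = 2^(m+1) by rw [pow_succ]; ring]
    rw [hu, hK]
    simp only [map_add, map_one]
    linear_combination h' + hz'
  -- 2^a = 0 in the quotient
  have h2a : (2 : (ZMod (2^a))[X] ⧸ I) ^ a = 0 := by
    have hSa : (2 : (ZMod (2^a))[X]) ^ a = 0 := by
      have h1 : ((2^a : ℕ) : (ZMod (2^a))[X]) = 0 := by
        rw [← map_natCast (C : ZMod (2^a) →+* (ZMod (2^a))[X]), ZMod.natCast_self, map_zero]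
      calc (2 : (ZMod (2^a))[X]) ^ a = ((2:ℕ) : (ZMod (2^a))[X]) ^ a := by norm_num
        _ = ((2^a : ℕ) : (ZMod (2^a))[X]) := by push_cast; ring
        _ = 0 := h1
    have h2 := congrArg π hSa
    rw [map_pow, map_zero, map_ofNat] at h2
    exact h2
  -- u is nilpotent
  have hnilu : IsNilpotent u := by
    refine ⟨2 ^ (m+1) * a, ?_⟩
    have hfac : u ^ 2 ^ (m+1) = 2 * (u ^ 2 ^ m + 2 * (u * K)) := by
      rw [show (2:ℕ)^(m+1) = 2^m + 2^m by rw [pow_succ]; ring, pow_add, key]; ring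
    rw [pow_mul, hfac, mul_pow, h2a]
    exact zero_mul _
  -- the inductive claim
  have claim : ∀ t : ℕ, ∃ b g : (ZMod (2^a))[X] ⧸ I, IsUnit b ∧
      (u ^ 2 ^ m) ^ (t + 2) = 2 ^ (t+1) * b * u ^ 2 ^ m + 2 ^ (t+2) * (u * g) := by
    intro t
    induction t with
    | zero =>
      refine ⟨1, K, isUnit_one, ?_⟩
      rw [show (u ^ 2 ^ m) ^ (0 + 2) = u ^ 2^m * u ^ 2^m by ring, key]
      ring
    | succ n ih =>
      obtain ⟨b, g, hb, heq⟩ := ih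
      refine ⟨b + u * g, b * K, ?_, ?_⟩
      · exact ((Commute.all u g).isNilpotent_mul_right hnilu).isUnit_add_left_of_commute hb (Commute.all _ _)
      · have hstep : (u ^ 2 ^ m) ^ (n + 1 + 2) = (u ^ 2 ^ m) ^ (n + 2) * u ^ 2 ^ m := by
          rw [← pow_succ]
        rw [hstep, heq]
        linear_combination (2^(n+1) * b) * key
  obtain ⟨b, g, hb, heq⟩ := claim t
  refine ⟨b, 2 ^ (t+2) * (u * g), hb, ?_, ?_⟩
  · exact Ideal.mem_span_singleton.mpr ⟨g, by ring⟩
  · have hexp : 2 ^ (m+1) + t * 2 ^ m = 2 ^ m * (t + 2) := by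
      rw [pow_succ]; ring
    rw [show m + 1 - 1 = m by omega, hexp, pow_mul]
    exact heq
end

section
/- Let $p$ be an odd prime, $a > 1$, $s \geq 1$, and $R = \mathbb{Z}_{p^a}[x]/\langle x^{p^s}+1 \rangle$. Then the annihilator of the maximal ideal $\langle p, x+1 \rangle$ in $R$ is the ideal $\langle p^{a-1}(x+1)^{p^s-1} \rangle$, and this ideal is a simple $R$-module; hence the socle of $R$ is simple. -/
open Polynomial

lemma eq_zero_of_dvd_of_degree_lt' {R : Type*} [CommRing R] {f d : R[X]} (hf : f.Monic)
    (hdvd : f ∣ d) (hd : d.degree < f.degree) : d = 0 := by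
  obtain ⟨q, rfl⟩ := hdvd
  rcases eq_or_ne q 0 with rfl | hq
  · simp
  · exfalso
    rw [mul_comm, hf.degree_mul] at hd
    have h0 : (0 : WithBot ℕ) ≤ q.degree := zero_le_degree_iff.mpr hq
    have := add_le_add h0 (le_refl f.degree)
    simp only [zero_add] at this
    exact absurd hd (not_lt.mpr this)

lemma zmod_pow_mul_eq_zero_iff (p a k : ℕ) (hp : p.Prime) (ha : 0 < a) (hk : k ≤ a)
    (c : ZMod (p ^ a)) :
    (p : ZMod (p ^ a)) ^ k * c = 0 ↔ ∃ d, c = (p : ZMod (p ^ a)) ^ (a - k) * d := by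
  haveI : NeZero (p ^ a) := ⟨(pow_pos hp.pos a).ne'⟩
  have hcval : ((c.val : ℕ) : ZMod (p ^ a)) = c := by
    rw [ZMod.natCast_val, ZMod.cast_id]
  constructor
  · intro h
    have h2 : ((p ^ k * c.val : ℕ) : ZMod (p ^ a)) = 0 := by
      push_cast
      rw [hcval]; exact h
    rw [ZMod.natCast_eq_zero_iff] at h2
    have hsplit : p ^ a = p ^ k * p ^ (a - k) := by
      rw [← pow_add]; congr 1; omega
    have hpk : p ^ k ≠ 0 := pow_ne_zero _ hp.pos.ne'
    have h2' : p ^ k * p ^ (a - k) ∣ p ^ k * c.val := by rw [← hsplit]; exact h2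
    have h3 : p ^ (a - k) ∣ c.val := (mul_dvd_mul_iff_left hpk).mp h2'
    obtain ⟨m, hm⟩ := h3
    refine ⟨(m : ZMod (p ^ a)), ?_⟩
    rw [← hcval, hm]
    push_cast
    ring
  · rintro ⟨d, rfl⟩
    rw [← mul_assoc, ← pow_add]
    have : k + (a - k) = a := by omega
    rw [this]
    have : ((p : ZMod (p ^ a)) ^ a) = 0 := by
      have := ZMod.natCast_self (p ^ a)
      push_cast at this
      exact this
    rw [this, zero_mul]

lemma zmod_cast_eq_zero_iff (p a : ℕ) (hp : p.Prime) (ha : 0 < a) (c : ZMod (p ^ a)) :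
    (ZMod.castHom (dvd_pow_self p ha.ne') (ZMod p)) c = 0 ↔
      ∃ d, c = (p : ZMod (p ^ a)) * d := by
  haveI : NeZero (p ^ a) := ⟨(pow_pos hp.pos a).ne'⟩
  have hcval : ((c.val : ℕ) : ZMod (p ^ a)) = c := by
    rw [ZMod.natCast_val, ZMod.cast_id]
  rw [ZMod.castHom_apply]
  have hcast : (c.cast : ZMod p) = ((c.val : ℕ) : ZMod p) := (ZMod.natCast_val c).symm
  rw [hcast, ZMod.natCast_eq_zero_iff]
  constructor
  · rintro ⟨m, hm⟩
    refine ⟨(m : ZMod (p ^ a)), ?_⟩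
    rw [← hcval, hm]; push_cast; ring
  · rintro ⟨d, rfl⟩
    have h1 : (p : ZMod (p ^ a)) * d = ((p * d.val : ℕ) : ZMod (p ^ a)) := by
      push_cast
      rw [ZMod.natCast_val, ZMod.cast_id]
    rw [h1, ZMod.val_natCast]
    rw [Nat.dvd_mod_iff (dvd_pow_self p ha.ne')]
    exact Dvd.intro _ rfl


lemma key_identity (p s : ℕ) (hp : p.Prime) (hodd : p ≠ 2) :
    ∃ H : ℤ[X], (X + 1 : ℤ[X]) ^ p ^ s =
      X ^ p ^ s + 1 + Polynomial.C (p : ℤ) * (X + 1) * H := by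
  haveI : Fact p.Prime := ⟨hp⟩
  have hodd' : Odd (p ^ s) := (hp.odd_of_ne_two hodd).pow
  set g : ℤ[X] := (X + 1) ^ p ^ s - X ^ p ^ s - 1 with hg
  have h1 : Polynomial.C (p : ℤ) ∣ g := by
    rw [Polynomial.C_dvd_iff_dvd_coeff]
    intro i
    have hmap : g.map (Int.castRingHom (ZMod p)) = 0 := by
      simp only [hg, Polynomial.map_sub, Polynomial.map_pow, Polynomial.map_add,
        Polynomial.map_X, Polynomial.map_one]
      rw [add_pow_char_pow]
      ring
    have h2 := congrArg (fun q => Polynomial.coeff q i) hmap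
    simp only [Polynomial.coeff_map, Polynomial.coeff_zero] at h2
    rw [eq_intCast, ZMod.intCast_zmod_eq_zero_iff_dvd] at h2
    exact_mod_cast h2
  obtain ⟨G, hG⟩ := h1
  have hgeval : g.eval (-1) = 0 := by
    simp [hg, hodd'.neg_one_pow, hp.ne_zero]
  have hGeval : G.eval (-1) = 0 := by
    have h3 := congrArg (Polynomial.eval (-1)) hG
    rw [hgeval] at h3
    simp only [Polynomial.eval_mul, Polynomial.eval_C] at h3
    have hp0 : (p : ℤ) ≠ 0 := by exact_mod_cast hp.pos.ne'
    exact (mul_eq_zero.mp h3.symm).resolve_left hp0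
  have hdvd : (X - Polynomial.C (-1 : ℤ)) ∣ G := Polynomial.dvd_iff_isRoot.mpr hGeval
  obtain ⟨H, hH⟩ := hdvd
  refine ⟨H, ?_⟩
  have hXC : (X - Polynomial.C (-1 : ℤ)) = X + 1 := by
    simp [sub_neg_eq_add]
  rw [hXC] at hH
  have : g = Polynomial.C (p : ℤ) * (X + 1) * H := by rw [hG, hH]; ring
  rw [hg] at this
  linear_combination this

set_option maxHeartbeats 1000000 in
theorem stmt19 (p a s : ℕ) (hp : p.Prime) (hodd : p ≠ 2) (ha : 1 < a) (hs : 1 ≤ s) :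
    (Ideal.span {((p : (ZMod (p ^ a))[X] ⧸
          Ideal.span {(X : (ZMod (p ^ a))[X]) ^ p ^ s + 1})),
        Ideal.Quotient.mk (Ideal.span {(X : (ZMod (p ^ a))[X]) ^ p ^ s + 1})
          (X + 1)}).annihilator =
      Ideal.span {(p : (ZMod (p ^ a))[X] ⧸
          Ideal.span {(X : (ZMod (p ^ a))[X]) ^ p ^ s + 1}) ^ (a - 1) *
        (Ideal.Quotient.mk (Ideal.span {(X : (ZMod (p ^ a))[X]) ^ p ^ s + 1})
          (X + 1)) ^ (p ^ s - 1)} ∧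
    IsSimpleModule ((ZMod (p ^ a))[X] ⧸ Ideal.span {(X : (ZMod (p ^ a))[X]) ^ p ^ s + 1})
      (Ideal.span {(p : (ZMod (p ^ a))[X] ⧸
          Ideal.span {(X : (ZMod (p ^ a))[X]) ^ p ^ s + 1}) ^ (a - 1) *
        (Ideal.Quotient.mk (Ideal.span {(X : (ZMod (p ^ a))[X]) ^ p ^ s + 1})
          (X + 1)) ^ (p ^ s - 1)}) ∧
    ∀ I : Ideal ((ZMod (p ^ a))[X] ⧸ Ideal.span {(X : (ZMod (p ^ a))[X]) ^ p ^ s + 1}),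
      I ≠ ⊥ → (∀ J, J ≤ I → J = ⊥ ∨ J = I) →
        I = Ideal.span {(p : (ZMod (p ^ a))[X] ⧸
            Ideal.span {(X : (ZMod (p ^ a))[X]) ^ p ^ s + 1}) ^ (a - 1) *
          (Ideal.Quotient.mk (Ideal.span {(X : (ZMod (p ^ a))[X]) ^ p ^ s + 1})
            (X + 1)) ^ (p ^ s - 1)} := by
  haveI : Fact p.Prime := ⟨hp⟩
  have ha0 : 0 < a := by omega
  haveI : NeZero (p ^ a) := ⟨(pow_pos hp.pos a).ne'⟩
  haveI : Fact (1 < p ^ a) := ⟨Nat.one_lt_pow ha0.ne' hp.one_lt⟩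
  set f : (ZMod (p ^ a))[X] := X ^ p ^ s + 1 with hf
  set Q : Ideal ((ZMod (p ^ a))[X]) := Ideal.span {f} with hQ
  set π : (ZMod (p ^ a))[X] ⧸ Q := Ideal.Quotient.mk Q (X + 1) with hπ
  set pp : (ZMod (p ^ a))[X] ⧸ Q := (p : (ZMod (p ^ a))[X] ⧸ Q) with hpp
  set e : (ZMod (p ^ a))[X] ⧸ Q := pp ^ (a - 1) * π ^ (p ^ s - 1) with he
  set m : Ideal ((ZMod (p ^ a))[X] ⧸ Q) := Ideal.span {pp, π} with hm
  -- basic facts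
  have hfmonic : f.Monic := monic_X_pow_add_C 1 (pow_ne_zero s hp.pos.ne')
  have hfdeg : f.degree = (p ^ s : ℕ) := by
    rw [hf, ← Polynomial.C_1]
    exact Polynomial.degree_X_pow_add_C (pow_pos hp.pos s) 1
  have hmkC : ∀ j : ℕ, Ideal.Quotient.mk Q (Polynomial.C ((p : ZMod (p ^ a)) ^ j))
      = pp ^ j := by
    intro j
    have h1 : (Polynomial.C ((p : ZMod (p ^ a)) ^ j)) = ((p : (ZMod (p ^ a))[X]) ^ j) := by
      rw [map_pow, Polynomial.C_eq_natCast]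
    rw [h1, map_pow, map_natCast]
  have hpa : pp ^ a = 0 := by
    have h1 : ((p ^ a : ℕ) : (ZMod (p ^ a))[X]) = 0 := by
      rw [← Polynomial.C_eq_natCast, ZMod.natCast_self, map_zero]
    rw [hpp, ← Nat.cast_pow, ← map_natCast (Ideal.Quotient.mk Q) (p ^ a), h1, map_zero]
  have hmkf : Ideal.Quotient.mk Q f = 0 :=
    Ideal.Quotient.eq_zero_iff_mem.mpr (Ideal.subset_span rfl)
  have hmkC1 : Ideal.Quotient.mk Q (Polynomial.C (p : ZMod (p ^ a))) = pp := by
    simpa using hmkC 1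
  obtain ⟨hq, hkey⟩ : ∃ h, π ^ p ^ s = pp * π * h := by
    obtain ⟨H, hH⟩ := key_identity p s hp hodd
    have hH2 := congrArg (Polynomial.map (Int.castRingHom (ZMod (p ^ a)))) hH
    simp only [Polynomial.map_pow, Polynomial.map_add, Polynomial.map_mul,
      Polynomial.map_one, Polynomial.map_X, Polynomial.map_C] at hH2
    have hcp : (Int.castRingHom (ZMod (p ^ a))) ((p : ℕ) : ℤ) = (p : ZMod (p ^ a)) := by
      simp
    rw [hcp] at hH2
    refine ⟨Ideal.Quotient.mk Q (H.map (Int.castRingHom (ZMod (p ^ a)))), ?_⟩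
    have h3 := congrArg (Ideal.Quotient.mk Q) hH2
    rw [map_add, map_mul, map_mul, hmkC1] at h3
    have h4 : (Ideal.Quotient.mk Q) ((X : (ZMod (p ^ a))[X]) ^ p ^ s + 1) = 0 := by
      rw [← hf]; exact hmkf
    rw [h4, zero_add] at h3
    rw [hπ, ← map_pow, h3]
  have hπnil : IsNilpotent π := by
    refine ⟨p ^ s * a, ?_⟩
    rw [pow_mul, hkey, mul_pow, mul_pow, hpa, zero_mul, zero_mul]
  have hpnil : IsNilpotent pp := ⟨a, hpa⟩
  have hjac : m ≤ Ideal.jacobson ⊥ := by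
    have hnr : nilradical ((ZMod (p ^ a))[X] ⧸ Q) ≤ Ideal.jacobson ⊥ := by
      rw [nilradical, Ideal.zero_eq_bot]
      exact Ideal.radical_le_jacobson
    rw [hm, Ideal.span_le]
    rintro x hx
    rcases hx with rfl | hx
    · exact hnr (mem_nilradical.mpr hpnil)
    · rw [Set.mem_singleton_iff] at hx
      subst hx
      exact hnr (mem_nilradical.mpr hπnil)
  have hunit : ∀ t : (ZMod (p ^ a))[X] ⧸ Q, t ∉ m → IsUnit t := by
    intro t ht
    obtain ⟨g, rfl⟩ := Ideal.Quotient.mk_surjective t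
    set c : ZMod (p ^ a) := g.eval (-1) with hcdef
    have hdecomp : g = Polynomial.C c + (X + 1) * (g /ₘ (X - Polynomial.C (-1))) := by
      have h1 := Polynomial.modByMonic_add_div g (X - Polynomial.C (-1 : ZMod (p ^ a)))
      rw [Polynomial.modByMonic_X_sub_C_eq_C_eval] at h1
      have hXC : X - Polynomial.C (-1 : ZMod (p ^ a)) = X + 1 := by
        simp
      rw [show (X - Polynomial.C (-1 : ZMod (p ^ a))) * (g /ₘ (X - Polynomial.C (-1))) =
          (X + 1) * (g /ₘ (X - Polynomial.C (-1))) by rw [hXC]] at h1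
      rw [← hcdef] at h1
      exact h1.symm
    by_cases hdvd : ∃ d, c = (p : ZMod (p ^ a)) * d
    · exfalso
      apply ht
      obtain ⟨d, hd⟩ := hdvd
      rw [hm, Ideal.mem_span_pair]
      refine ⟨Ideal.Quotient.mk Q (Polynomial.C d),
        Ideal.Quotient.mk Q (g /ₘ (X - Polynomial.C (-1))), ?_⟩
      have h5 : Ideal.Quotient.mk Q (Polynomial.C c) =
          pp * Ideal.Quotient.mk Q (Polynomial.C d) := by
        rw [hd, map_mul, map_mul, hmkC1]
      conv_rhs => rw [hdecomp]
      rw [map_add, map_mul, h5, hπ]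
      ring
    · have hpc : ¬ (p ∣ c.val) := by
        intro ⟨k, hk⟩
        apply hdvd
        have hcv : ((c.val : ℕ) : ZMod (p ^ a)) = c := by
          rw [ZMod.natCast_val, ZMod.cast_id]
        exact ⟨(k : ZMod (p ^ a)), by rw [← hcv, hk]; push_cast; ring⟩
      have hcop : c.val.Coprime (p ^ a) :=
        Nat.Coprime.pow_right a ((Nat.coprime_comm).mp (hp.coprime_iff_not_dvd.mpr hpc))
      have hcu : IsUnit c := by
        have := (ZMod.isUnit_iff_coprime c.val (p ^ a)).mpr hcop
        rwa [show ((c.val : ℕ) : ZMod (p ^ a)) = c by rw [ZMod.natCast_val, ZMod.cast_id]] at this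
      have hcu2 : IsUnit (Ideal.Quotient.mk Q (Polynomial.C c)) :=
        hcu.map ((Ideal.Quotient.mk Q).comp Polynomial.C)
      have hnil2 : IsNilpotent (π * Ideal.Quotient.mk Q (g /ₘ (X - Polynomial.C (-1)))) := by
        rw [mul_comm]
        exact (Commute.all _ _).isNilpotent_mul_left hπnil
      have hsum : Ideal.Quotient.mk Q g = Ideal.Quotient.mk Q (Polynomial.C c) +
          π * Ideal.Quotient.mk Q (g /ₘ (X - Polynomial.C (-1))) := by
        conv_lhs => rw [hdecomp]
        rw [map_add, map_mul, hπ]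
      rw [hsum]
      exact IsNilpotent.isUnit_add_left_of_commute hnil2 hcu2 (Commute.all _ _)
  have hppa : pp ^ (a - 1) * pp = pp ^ a := by
    rw [← pow_succ]; congr 1; omega
  have hepp : e * pp = 0 := by
    calc e * pp = (pp ^ (a - 1) * pp) * π ^ (p ^ s - 1) := by rw [he]; ring
      _ = 0 := by rw [hppa, hpa, zero_mul]
  have heπ : e * π = 0 := by
    have h2 : π ^ (p ^ s - 1) * π = π ^ p ^ s := by
      rw [← pow_succ]; congr 1
      have := pow_pos hp.pos s; omega
    calc e * π = pp ^ (a - 1) * (π ^ (p ^ s - 1) * π) := by rw [he]; ring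
      _ = pp ^ (a - 1) * (pp * π * hq) := by rw [h2, hkey]
      _ = (pp ^ (a - 1) * pp) * (π * hq) := by ring
      _ = 0 := by rw [hppa, hpa, zero_mul]
  have hu0 : ((p : ZMod (p ^ a)) ^ (a - 1)) ≠ 0 := by
    intro h0
    have h1 : ((p ^ (a - 1) : ℕ) : ZMod (p ^ a)) = 0 := by push_cast; exact h0
    rw [ZMod.natCast_eq_zero_iff] at h1
    have := (Nat.pow_dvd_pow_iff_le_right hp.one_lt).mp h1
    omega
  have hmq : ((X : (ZMod (p ^ a))[X]) + 1).Monic := by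
    rw [← Polynomial.C_1]; exact Polynomial.monic_X_add_C 1
  have hmqk : (((X : (ZMod (p ^ a))[X]) + 1) ^ (p ^ s - 1)).Monic := hmq.pow _
  have hco : (((X : (ZMod (p ^ a))[X]) + 1) ^ (p ^ s - 1)).coeff (p ^ s - 1) = 1 := by
    have hnat : (((X : (ZMod (p ^ a))[X]) + 1) ^ (p ^ s - 1)).natDegree = p ^ s - 1 := by
      rw [hmq.natDegree_pow, ← Polynomial.C_1, Polynomial.natDegree_X_add_C, mul_one]
    have hcn := hmqk.coeff_natDegree
    rwa [hnat] at hcn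
  have hdegk : (((X : (ZMod (p ^ a))[X]) + 1) ^ (p ^ s - 1)).degree ≤ ((p ^ s - 1 : ℕ) : WithBot ℕ) := by
    refine le_trans (Polynomial.degree_pow_le _ _) ?_
    rw [← Polynomial.C_1, Polynomial.degree_X_add_C]
    simp
  have hrep : e = Ideal.Quotient.mk Q
      (Polynomial.C ((p : ZMod (p ^ a)) ^ (a - 1)) * (X + 1) ^ (p ^ s - 1)) := by
    rw [map_mul, hmkC, map_pow, ← hπ, he]
  have hene : e ≠ 0 := by
    intro h0
    rw [hrep, Ideal.Quotient.eq_zero_iff_mem, hQ, Ideal.mem_span_singleton] at h0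
    have hzero := eq_zero_of_dvd_of_degree_lt' hfmonic h0 ?_
    · have hc2 := congrArg (fun q => Polynomial.coeff q (p ^ s - 1)) hzero
      simp only [Polynomial.coeff_C_mul, Polynomial.coeff_zero] at hc2
      rw [hco, mul_one] at hc2
      exact hu0 hc2
    · have hdle : (Polynomial.C ((p : ZMod (p ^ a)) ^ (a - 1)) *
          (X + 1) ^ (p ^ s - 1)).degree ≤ ((p ^ s - 1 : ℕ) : WithBot ℕ) := by
        refine le_trans (Polynomial.degree_mul_le _ _) ?_
        refine le_trans (add_le_add Polynomial.degree_C_le hdegk) ?_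
        rw [zero_add]
      refine lt_of_le_of_lt hdle ?_
      rw [hfdeg]
      exact_mod_cast (by have := pow_pos hp.pos s; omega : p ^ s - 1 < p ^ s)
  have hann : m.annihilator = Ideal.span {e} := by
    apply le_antisymm
    · intro r hr
      have hrmem : ∀ x ∈ m, r * x = 0 := by
        intro x hx
        have h0 := (Submodule.mem_annihilator.mp hr) x hx
        rwa [smul_eq_mul] at h0
      have hrp : r * pp = 0 := hrmem pp (by
        rw [hm]; exact Ideal.subset_span (Set.mem_insert _ _))
      have hrπ : r * π = 0 := hrmem π (by
        rw [hm]; exact Ideal.subset_span (Set.mem_insert_of_mem _ rfl))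
      clear hrmem hr
      obtain ⟨g₀, rfl⟩ := Ideal.Quotient.mk_surjective r
      set g := g₀ %ₘ f with hgdef
      have hdeg_g : g.degree < f.degree := Polynomial.degree_modByMonic_lt g₀ hfmonic
      have hmkg : Ideal.Quotient.mk Q g = Ideal.Quotient.mk Q g₀ := by
        conv_rhs => rw [← Polynomial.modByMonic_add_div g₀ f]
        rw [map_add, map_mul, hmkf, zero_mul, add_zero]
      rw [← hmkg] at hrp hrπ ⊢
      -- Step A : C (p^(a-1)) ∣ g
      have hA : Polynomial.C ((p : ZMod (p ^ a)) ^ (a - 1)) ∣ g := by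
        have h1 : Ideal.Quotient.mk Q (g * Polynomial.C (p : ZMod (p ^ a))) = 0 := by
          rw [map_mul, hmkC1]; exact hrp
        rw [Ideal.Quotient.eq_zero_iff_mem, hQ, Ideal.mem_span_singleton] at h1
        have h2 : g * Polynomial.C (p : ZMod (p ^ a)) = 0 := by
          apply eq_zero_of_dvd_of_degree_lt' hfmonic h1
          refine lt_of_le_of_lt ?_ hdeg_g
          refine le_trans (Polynomial.degree_mul_le _ _) ?_
          refine le_trans (add_le_add (le_refl g.degree) Polynomial.degree_C_le) ?_
          rw [add_zero]
        rw [Polynomial.C_dvd_iff_dvd_coeff]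
        intro i
        have h4 := congrArg (fun qq => Polynomial.coeff qq i) h2
        simp only [Polynomial.coeff_mul_C, Polynomial.coeff_zero] at h4
        rw [mul_comm] at h4
        obtain ⟨d, hd⟩ := (zmod_pow_mul_eq_zero_iff p a 1 hp ha0 (by omega)
          (g.coeff i)).mp (by rwa [pow_one])
        exact ⟨d, hd⟩
      obtain ⟨G, hGg⟩ := hA
      -- Step B
      set w := ((X + 1) * G) %ₘ f with hwdef
      set q₂ := ((X + 1) * G) /ₘ f with hq2def
      have hwdeg : w.degree < f.degree := Polynomial.degree_modByMonic_lt _ hfmonic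
      have hwdiv : w + f * q₂ = (X + 1) * G := Polynomial.modByMonic_add_div _ f
      have hB1 : f ∣ g * (X + 1) := by
        have h1 : Ideal.Quotient.mk Q (g * (X + 1)) = 0 := by
          rw [map_mul, ← hπ]; exact hrπ
        rwa [Ideal.Quotient.eq_zero_iff_mem, hQ, Ideal.mem_span_singleton] at h1
      have hB2 : f ∣ Polynomial.C ((p : ZMod (p ^ a)) ^ (a - 1)) * w := by
        have h1 : Polynomial.C ((p : ZMod (p ^ a)) ^ (a - 1)) * w =
            g * (X + 1) - f * (Polynomial.C ((p : ZMod (p ^ a)) ^ (a - 1)) * q₂) := by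
          rw [hGg]
          linear_combination (Polynomial.C ((p : ZMod (p ^ a)) ^ (a - 1))) * hwdiv
        rw [h1]
        exact dvd_sub hB1 (dvd_mul_right f _)
      have hw0 : Polynomial.C ((p : ZMod (p ^ a)) ^ (a - 1)) * w = 0 := by
        apply eq_zero_of_dvd_of_degree_lt' hfmonic hB2
        refine lt_of_le_of_lt ?_ hwdeg
        refine le_trans (Polynomial.degree_mul_le _ _) ?_
        refine le_trans (add_le_add Polynomial.degree_C_le (le_refl w.degree)) ?_
        rw [zero_add]
      have hwp : Polynomial.C (p : ZMod (p ^ a)) ∣ w := by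
        rw [Polynomial.C_dvd_iff_dvd_coeff]
        intro i
        have h4 := congrArg (fun qq => Polynomial.coeff qq i) hw0
        simp only [Polynomial.coeff_C_mul, Polynomial.coeff_zero] at h4
        obtain ⟨d, hd⟩ := (zmod_pow_mul_eq_zero_iff p a (a - 1) hp ha0 (by omega)
          (w.coeff i)).mp h4
        rw [show a - (a - 1) = 1 by omega, pow_one] at hd
        exact ⟨d, hd⟩
      obtain ⟨w₂, hw2⟩ := hwp
      -- pass to ZMod p
      have hXG : (X + 1) * G = Polynomial.C (p : ZMod (p ^ a)) * w₂ + f * q₂ := by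
        rw [← hwdiv, hw2]
      set ρ := ZMod.castHom (dvd_pow_self p ha0.ne') (ZMod p) with hρ
      have hmap : (X + 1) * G.map ρ = ((X + 1 : (ZMod p)[X]) ^ p ^ s) * q₂.map ρ := by
        have h5 := congrArg (Polynomial.map ρ) hXG
        simp only [Polynomial.map_mul, Polynomial.map_add, Polynomial.map_C,
          Polynomial.map_X, Polynomial.map_one] at h5
        have hρp : ρ (p : ZMod (p ^ a)) = 0 := by
          rw [map_natCast, ZMod.natCast_self]
        rw [hρp, Polynomial.C_0, zero_mul, zero_add] at h5
        have hfmap : f.map ρ = (X + 1 : (ZMod p)[X]) ^ p ^ s := by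
          rw [hf]
          simp only [Polynomial.map_add, Polynomial.map_pow, Polynomial.map_X,
            Polynomial.map_one]
          rw [add_pow_char_pow, one_pow]
        rw [hfmap] at h5
        exact h5
      have hXne : ((X : (ZMod p)[X]) + 1) ≠ 0 := by
        have hmon : ((X : (ZMod p)[X]) + 1).Monic := by
          rw [← Polynomial.C_1]; exact Polynomial.monic_X_add_C 1
        exact hmon.ne_zero
      have hps1 : p ^ s - 1 + 1 = p ^ s := by
        have := pow_pos hp.pos s; omega
      have hG2 : G.map ρ = ((X + 1 : (ZMod p)[X]) ^ (p ^ s - 1)) * q₂.map ρ := by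
        apply mul_left_cancel₀ hXne
        rw [hmap, ← mul_assoc, ← pow_succ', hps1]
      have hdiff : Polynomial.C (p : ZMod (p ^ a)) ∣ (G - (X + 1) ^ (p ^ s - 1) * q₂) := by
        rw [Polynomial.C_dvd_iff_dvd_coeff]
        intro i
        have h6 : ((G - (X + 1) ^ (p ^ s - 1) * q₂).map ρ) = 0 := by
          simp only [Polynomial.map_sub, Polynomial.map_mul, Polynomial.map_pow,
            Polynomial.map_add, Polynomial.map_X, Polynomial.map_one]
          rw [sub_eq_zero]
          exact hG2
        have h7 := congrArg (fun qq => Polynomial.coeff qq i) h6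
        simp only [Polynomial.coeff_map, Polynomial.coeff_zero] at h7
        obtain ⟨d, hd⟩ := (zmod_cast_eq_zero_iff p a hp ha0 _).mp h7
        exact ⟨d, hd⟩
      obtain ⟨G₂, hG₂⟩ := hdiff
      have hGfinal : G = (X + 1) ^ (p ^ s - 1) * q₂ + Polynomial.C (p : ZMod (p ^ a)) * G₂ := by
        rw [← hG₂]; ring
      -- conclude
      rw [Ideal.mem_span_singleton']
      refine ⟨Ideal.Quotient.mk Q q₂, ?_⟩
      have hmkG : Ideal.Quotient.mk Q G = π ^ (p ^ s - 1) * Ideal.Quotient.mk Q q₂ +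
          pp * Ideal.Quotient.mk Q G₂ := by
        conv_lhs => rw [hGfinal]
        rw [map_add, map_mul, map_mul, map_pow, ← hπ, hmkC1]
      have hfin : Ideal.Quotient.mk Q g = e * Ideal.Quotient.mk Q q₂ := by
        conv_lhs => rw [hGg]
        rw [map_mul, hmkC, hmkG, he, mul_add,
          show pp ^ (a - 1) * (pp * Ideal.Quotient.mk Q G₂) =
            (pp ^ (a - 1) * pp) * Ideal.Quotient.mk Q G₂ by ring,
          hppa, hpa, zero_mul, add_zero]
        ring
      rw [hfin]
      exact mul_comm _ _
    · rw [Ideal.span_le, Set.singleton_subset_iff, SetLike.mem_coe, hm]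
      rw [Ideal.span, Submodule.mem_annihilator_span]
      rintro ⟨x, hx⟩
      rcases hx with rfl | hx
      · rw [smul_eq_mul]; exact hepp
      · rw [Set.mem_singleton_iff] at hx
        subst hx
        rw [smul_eq_mul]; exact heπ
  have hatom : IsAtom (Ideal.span {e}) := by
    constructor
    · rw [Ne, Ideal.span_singleton_eq_bot]; exact hene
    · intro J hJ
      by_contra hJne
      obtain ⟨v, hvJ, hv0⟩ : ∃ v ∈ J, v ≠ 0 := by
        by_contra hno
        push_neg at hno
        exact hJne ((Submodule.eq_bot_iff J).mpr hno)
      obtain ⟨t, hvt⟩ := Ideal.mem_span_singleton'.mp (hJ.le hvJ)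
      have htm : t ∉ m := by
        intro htm
        obtain ⟨x, y, hxy⟩ := Ideal.mem_span_pair.mp (hm ▸ htm)
        apply hv0
        rw [← hvt, ← hxy]
        calc (x * pp + y * π) * e = x * (e * pp) + y * (e * π) := by ring
          _ = 0 := by rw [hepp, heπ]; ring
      obtain ⟨u, rfl⟩ := hunit t htm
      have heJ : e ∈ J := by
        have h6 : e = (↑u⁻¹ : (ZMod (p ^ a))[X] ⧸ Q) * v := by
          rw [← hvt, ← mul_assoc, Units.inv_mul, one_mul]
        rw [h6]
        exact J.mul_mem_left _ hvJ
      have h7 : Ideal.span {e} ≤ J := by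
        rw [Ideal.span_le, Set.singleton_subset_iff]
        exact heJ
      exact absurd h7 (not_le_of_gt hJ)
  refine ⟨hann, isSimpleModule_iff_isAtom.mpr hatom, ?_⟩
  intro I hI hmin
  have hsmul : m • I ≤ I := Submodule.smul_le_right
  rcases hmin (m • I) hsmul with hbot | heq
  · -- m • I = ⊥  ⇒  I ≤ ann m = span {e}
    have hIle : I ≤ Ideal.span {e} := by
      rw [← hann]
      intro r hr
      rw [Submodule.mem_annihilator]
      intro x hx
      have : x • r ∈ m • I := Submodule.smul_mem_smul hx hr
      rw [hbot] at this
      rw [Submodule.mem_bot] at this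
      rw [smul_eq_mul, mul_comm]
      rw [smul_eq_mul] at this
      exact this
    rcases lt_or_eq_of_le hIle with hlt | heq
    · exact absurd (hatom.2 _ hlt) hI
    · exact heq
  · -- Nakayama contradiction
    exfalso
    have hfg : I.FG := IsNoetherian.noetherian I
    exact hI (Submodule.eq_bot_of_le_smul_of_le_jacobson_bot m I hfg heq.ge hjac)
end
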